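/- arXiv:1005.2745 — 10 statements merged into one kernel-verified Lean document; each statement's English description precedes it below -/
import Mathlib

section
/- (Jensen's identity) For all complex numbers x, y, z and every natural number n, the sum over k from 0 to n of C(x+kz, k)·C(y−kz, n−k) equals the sum over k from 0 to n of C(x+y−k, n−k)·z^k. -/
/-- The generalized binomial coefficient `C(x, k) = x(x-1)⋯(x-k+1)/k!` for `x : ℂ`. -/
noncomputable def genBinom (x : ℂ) (k : ℕ) : ℂ := (∏ i ∈ Finset.range k, (x - i)) / (Nat.factorial k)

/-!
Both sides satisfy Pascal-type recurrences: replacing `y` by `y + 1`, or `x` by `x + 1`, changes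
them by the corresponding sums of order `n - 1` (taken at `(x + z, y - z)` in the second case for
the left side, which is harmless since the right side only depends on `x + y`). By induction on
`n`, the difference of the two sides is therefore `1`-periodic in `x` and in `y`, and being
polynomial in each variable (`Ring.choose` commutes with evaluation of the same sums formed over
`K[X]`) it is constant. At `x = y = 0` both sides equal `z (z - 1)^(n-1)`:
on the right by the binomial theorem, on the left because the sum is the `n`-th finite difference
of a polynomial of degree `n` with leading coefficient `z (z - 1)^(n-1)`.
-/

open Finset Polynomial Function
open scoped Nat

theorem descPochhammer_eval_mul_descPochhammer_eval_sub {R : Type*} [CommRing R] (a : R)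
    (n m : ℕ) :
    (descPochhammer R n).eval a * (descPochhammer R m).eval (a - n) =
      (descPochhammer R (n + m)).eval a := by
  simpa using congrArg (Polynomial.eval a) (descPochhammer_mul (R := R) n m)

section BinomialRing

variable {R : Type*} [CommRing R] [BinomialRing R]

def jensenLeft (n : ℕ) (x y z : R) : R :=
  ∑ k ∈ range (n + 1), Ring.choose (x + k * z) k * Ring.choose (y - k * z) (n - k)

def jensenRight (n : ℕ) (s z : R) : R :=
  ∑ k ∈ range (n + 1), Ring.choose (s - k) (n - k) * z ^ k

theorem map_jensenLeft {S : Type*} [CommRing S] [BinomialRing S] (f : R →+* S) (n : ℕ)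
    (x y z : R) : f (jensenLeft n x y z) = jensenLeft n (f x) (f y) (f z) := by
  simp [jensenLeft, Ring.map_choose]

theorem map_jensenRight {S : Type*} [CommRing S] [BinomialRing S] (f : R →+* S) (n : ℕ)
    (s z : R) : f (jensenRight n s z) = jensenRight n (f s) (f z) := by
  simp [jensenRight, Ring.map_choose]

theorem jensenLeft_succ_y_add_one (n : ℕ) (x y z : R) :
    jensenLeft (n + 1) x (y + 1) z = jensenLeft (n + 1) x y z + jensenLeft n x y z := by
  rw [jensenLeft, jensenLeft, jensenLeft, sum_range_succ, sum_range_succ _ (n + 1), Nat.sub_self,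
    Ring.choose_zero_right, Ring.choose_zero_right, add_right_comm, ← sum_add_distrib]
  congr 1
  refine sum_congr rfl fun k hk => ?_
  rw [show n + 1 - k = n - k + 1 by grind, show y + 1 - k * z = y - k * z + 1 by ring,
    Ring.choose_succ_succ]
  ring

theorem jensenLeft_succ_x_add_one (n : ℕ) (x y z : R) :
    jensenLeft (n + 1) (x + 1) y z = jensenLeft (n + 1) x y z + jensenLeft n (x + z) (y - z) z := by
  rw [jensenLeft, jensenLeft, jensenLeft, sum_range_succ', sum_range_succ' _ (n + 1),
    Ring.choose_zero_right, Ring.choose_zero_right, add_right_comm, ← sum_add_distrib]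
  congr 1
  refine sum_congr rfl fun k _ => ?_
  rw [Nat.add_sub_add_right, show x + 1 + ↑(k + 1) * z = x + ↑(k + 1) * z + 1 by ring,
    Ring.choose_succ_succ, show x + ↑(k + 1) * z = x + z + k * z by push_cast; ring,
    show y - ↑(k + 1) * z = y - z - k * z by push_cast; ring]
  ring

theorem jensenRight_succ_add_one (n : ℕ) (s z : R) :
    jensenRight (n + 1) (s + 1) z = jensenRight (n + 1) s z + jensenRight n s z := by
  rw [jensenRight, jensenRight, jensenRight, sum_range_succ, sum_range_succ _ (n + 1), Nat.sub_self,
    Ring.choose_zero_right, Ring.choose_zero_right, add_right_comm, ← sum_add_distrib]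
  congr 1
  refine sum_congr rfl fun k hk => ?_
  rw [show n + 1 - k = n - k + 1 by grind, show s + 1 - k = s - k + 1 by ring,
    Ring.choose_succ_succ]
  ring

theorem jensenRight_succ_zero (n : ℕ) (z : R) : jensenRight (n + 1) 0 z = z * (z - 1) ^ n := by
  rw [jensenRight, sum_range_succ', Nat.cast_zero, sub_zero, Nat.sub_zero, Ring.choose_zero_succ,
    zero_mul, add_zero, sub_eq_add_neg, add_pow, mul_sum]
  refine sum_congr rfl fun k hk => ?_
  have hk : k ≤ n := Nat.lt_succ_iff.1 (mem_range.1 hk)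
  rw [Nat.add_sub_add_right, zero_sub, Ring.choose_neg, Units.smul_def, Int.coe_negOnePow_natCast,
    show ((k + 1 : ℕ) : R) + (n - k : ℕ) - 1 = n by push_cast [Nat.cast_sub hk]; ring,
    Ring.choose_natCast, Nat.choose_symm hk, zsmul_eq_mul]
  push_cast
  ring

theorem Ring.factorial_mul_choose_eq_descPochhammer_eval (a : R) (n : ℕ) :
    (n ! : R) * Ring.choose a n = (descPochhammer R n).eval a := by
  rw [← nsmul_eq_mul, ← Ring.descPochhammer_eq_factorial_smul_choose,
    descPochhammer_smeval_eq_ascPochhammer, ascPochhammer_smeval_eq_eval,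
    descPochhammer_eval_eq_ascPochhammer]

theorem Ring.factorial_mul_choose_neg (a : R) (n : ℕ) :
    (n ! : R) * Ring.choose (-a) n = (-1) ^ n * (descPochhammer R n).eval (a + n - 1) := by
  rw [Ring.choose_neg, Units.smul_def, Int.coe_negOnePow_natCast, zsmul_eq_mul,
    ← factorial_mul_choose_eq_descPochhammer_eval]
  push_cast
  ring

theorem Ring.factorial_mul_factorial_mul_choose_mul_choose_neg (w : R) {n k j : ℕ}
    (h : k + j = n + 1) :
    (k ! * j ! : R) * (Ring.choose w k * Ring.choose (-w) j) =
      (-1) ^ j * (w * (descPochhammer R n).eval (w + j - 1)) := by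
  rw [mul_mul_mul_comm, Ring.factorial_mul_choose_eq_descPochhammer_eval,
    Ring.factorial_mul_choose_neg]
  rcases j with _ | j
  · obtain rfl : k = n + 1 := h
    simp [descPochhammer_succ_left]
  · obtain rfl : n = j + k := by omega
    rw [Nat.cast_succ, show w + (j + 1) - 1 = w + j by ring, descPochhammer_succ_eval,
      ← descPochhammer_eval_mul_descPochhammer_eval_sub (w + j) j k, add_sub_cancel_right]
    ring

end BinomialRing

theorem Function.Periodic.eq_apply_zero_of_eq_eval {R : Type*} [CommRing R] [IsDomain R]
    [CharZero R] {f : R → R} (hf : Periodic f 1) {p : R[X]} (hp : f = p.eval) (t : R) :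
    f t = f 0 := by
  subst hp
  suffices p = C (p.eval 0) by simp only; rw [this, eval_C, eval_C]
  refine eq_of_infinite_eval_eq _ _ <| (Set.infinite_range_of_injective Nat.cast_injective).mono ?_
  rintro _ ⟨k, rfl⟩
  simpa using hf.nat_mul_eq k

theorem Polynomial.sum_range_succ_neg_one_pow_mul_choose_mul_eval {R : Type*} [CommRing R]
    {p : R[X]} {n : ℕ} (hp : p.natDegree ≤ n) :
    ∑ k ∈ range (n + 1), (-1) ^ (n - k) * (n.choose k : R) * p.eval (k : R) =
      n ! * p.coeff n := by
  have hΔ : (fwdDiff 1)^[n] p.eval 0 = n ! * p.coeff n := by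
    rcases hp.lt_or_eq with hlt | rfl
    · simp [fwdDiff_iter_eq_zero_of_degree_lt hlt, coeff_eq_zero_of_natDegree_lt hlt]
    · simp [fwdDiff_iter_degree_eq_factorial, mul_comm]
  rw [← hΔ, fwdDiff_iter_eq_sum_shift]
  refine sum_congr rfl fun k _ => ?_
  simp [zsmul_eq_mul]

section CommRing

variable {R : Type*} [CommRing R]

-- At `k ≤ n + 1` it takes the value `(-1) ^ (n + 1 - k) * k! * (n + 1 - k)!` times the
-- `k`-th summand `C(kz, k) * C(-kz, n + 1 - k)` of the left side at `x = y = 0`.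
noncomputable def jensenBasePoly (n : ℕ) (z : R) : R[X] :=
  C z * X * ∏ i ∈ range n, (C (z - 1) * X + C ((n : R) - i))

theorem eval_jensenBasePoly (n : ℕ) (z t : R) :
    (jensenBasePoly n z).eval t = z * t * (descPochhammer R n).eval ((z - 1) * t + n) := by
  simp [jensenBasePoly, eval_prod, descPochhammer_eval_eq_prod_range, add_sub_assoc]

theorem natDegree_jensenBasePoly_le (n : ℕ) (z : R) :
    (jensenBasePoly n z).natDegree ≤ n + 1 := by
  have hprod : (∏ i ∈ range n, (C (z - 1) * X + C ((n : R) - i))).natDegree ≤ n :=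
    (natDegree_prod_le _ _).trans <|
      (sum_le_card_nsmul _ _ 1 fun i _ => natDegree_linear_le).trans (by simp)
  have hlin : (C z * X).natDegree ≤ 1 := (natDegree_C_mul_le _ _).trans natDegree_X_le
  exact natDegree_mul_le.trans (by omega)

theorem coeff_jensenBasePoly_succ (n : ℕ) (z : R) :
    (jensenBasePoly n z).coeff (n + 1) = z * (z - 1) ^ n := by
  rw [jensenBasePoly, mul_assoc, coeff_C_mul, coeff_X_mul]
  congr 1
  simpa using coeff_prod_of_natDegree_le (s := range n)
    (fun i => C (z - 1) * X + C ((n : R) - i)) 1 fun i _ => natDegree_linear_le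

end CommRing

section Field

variable {K : Type*} [Field K] [CharZero K]

theorem jensenLeft_succ_zero_zero (n : ℕ) (z : K) :
    jensenLeft (n + 1) 0 0 z = z * (z - 1) ^ n := by
  have hterm : ∀ k ∈ range (n + 2), ((n + 1)! : K) *
      (Ring.choose (0 + k * z) k * Ring.choose (0 - k * z) (n + 1 - k)) =
        (-1) ^ (n + 1 - k) * ((n + 1).choose k : K) * (jensenBasePoly n z).eval (k : K) := by
    intro k hk
    have hk : k ≤ n + 1 := Nat.lt_succ_iff.1 (mem_range.1 hk)
    have h :=
      Ring.factorial_mul_factorial_mul_choose_mul_choose_neg (k * z) (Nat.add_sub_cancel' hk)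
    rw [zero_add, zero_sub, ← Nat.choose_mul_factorial_mul_factorial hk, eval_jensenBasePoly,
      show (z - 1) * k + n = k * z + (n + 1 - k : ℕ) - 1 by push_cast [Nat.cast_sub hk]; ring]
    push_cast at h ⊢
    linear_combination ((n + 1).choose k : K) * h
  apply mul_left_cancel₀ (Nat.cast_ne_zero.2 (n + 1).factorial_ne_zero : ((n + 1)! : K) ≠ 0)
  rw [jensenLeft, mul_sum, sum_congr rfl hterm,
    sum_range_succ_neg_one_pow_mul_choose_mul_eval (natDegree_jensenBasePoly_le n z),
    coeff_jensenBasePoly_succ]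

theorem jensenLeft_eq_jensenRight (n : ℕ) (x y z : K) :
    jensenLeft n x y z = jensenRight n (x + y) z := by
  induction n generalizing x y with
  | zero => simp [jensenLeft, jensenRight]
  | succ n ih =>
    set D : K → K → K := fun x y => jensenLeft (n + 1) x y z - jensenRight (n + 1) (x + y) z
    have periodic_right (x : K) : Periodic (D x) 1 := fun y => by
      simp only [D]
      rw [jensenLeft_succ_y_add_one, ← add_assoc, jensenRight_succ_add_one, ih]
      ring
    have periodic_left (y : K) : Periodic (D · y) 1 := fun x => by
      simp only [D]
      rw [jensenLeft_succ_x_add_one, ih, show x + z + (y - z) = x + y by ring,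
        show x + 1 + y = x + y + 1 by ring, jensenRight_succ_add_one]
      ring
    have eval_right (x : K) : D x = (jensenLeft (n + 1) (C x) X (C z) -
        jensenRight (n + 1) (C x + X) (C z)).eval := by
      ext t
      rw [eval_sub, ← coe_evalRingHom, map_jensenLeft, map_jensenRight]
      simp [D]
    have eval_left (y : K) : (D · y) = (jensenLeft (n + 1) X (C y) (C z) -
        jensenRight (n + 1) (X + C y) (C z)).eval := by
      ext t
      rw [eval_sub, ← coe_evalRingHom, map_jensenLeft, map_jensenRight]
      simp [D]
    have hD : D x y = D 0 0 := calc
      D x y = D x 0 := (periodic_right x).eq_apply_zero_of_eq_eval (eval_right x) y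
      _ = D 0 0 := (periodic_left 0).eq_apply_zero_of_eq_eval (eval_left 0) x
    have hD0 : D 0 0 = 0 := by
      simp [D, jensenLeft_succ_zero_zero, jensenRight_succ_zero]
    exact sub_eq_zero.1 (hD.trans hD0)

end Field

theorem genBinom_eq_choose (x : ℂ) (k : ℕ) : genBinom x k = Ring.choose x k := by
  rw [genBinom, ← descPochhammer_eval_eq_prod_range,
    ← Ring.factorial_mul_choose_eq_descPochhammer_eval,
    mul_div_cancel_left₀ _ (Nat.cast_ne_zero.2 k.factorial_ne_zero)]

/-- Jensen's identity. -/
theorem jensen_identity (x y z : ℂ) (n : ℕ) :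
    ∑ k ∈ Finset.range (n + 1), genBinom (x + k * z) k * genBinom (y - k * z) (n - k) =
      ∑ k ∈ Finset.range (n + 1), genBinom (x + y - k) (n - k) * z ^ k := by
  simp only [genBinom_eq_choose]
  exact jensenLeft_eq_jensenRight n x y z
end

section
/- For all complex numbers x, y, z and every natural number n, the sum over k from 0 to n of C(x+kz, k)·C(y−kz, n−k) equals the sum over i from 0 to n of C(x+y+1, n−i)·(z−1)^i. -/
@[simp] lemma genBinom_zero (x : ℂ) : genBinom x 0 = 1 := by simp [genBinom]

lemma genBinom_pascal (x : ℂ) (k : ℕ) :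
    genBinom x (k+1) = genBinom (x-1) (k+1) + genBinom (x-1) k := by
  have h1 : ∏ i ∈ Finset.range (k+1), (x - i) = (∏ i ∈ Finset.range k, (x - 1 - i)) * x := by
    rw [Finset.prod_range_succ']
    simp only [Nat.cast_zero, sub_zero]
    congr 1
    apply Finset.prod_congr rfl
    intro i _
    push_cast
    ring
  have h2 : ∏ i ∈ Finset.range (k+1), (x - 1 - i) =
      (∏ i ∈ Finset.range k, (x - 1 - i)) * (x - 1 - k) := Finset.prod_range_succ _ _
  have hk : ((k+1).factorial : ℂ) = (k+1) * k.factorial := by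
    rw [Nat.factorial_succ]; push_cast; ring
  have hkf : (k.factorial : ℂ) ≠ 0 := Nat.cast_ne_zero.mpr k.factorial_ne_zero
  have hk1 : ((k:ℂ)+1) ≠ 0 := by
    have := Nat.cast_add_one_ne_zero (R := ℂ) k
    exact_mod_cast this
  unfold genBinom
  rw [h1, h2, hk]
  field_simp
  ring

lemma genBinom_zero_left (m : ℕ) (hm : m ≠ 0) : genBinom 0 m = 0 := by
  unfold genBinom
  rw [Finset.prod_eq_zero (Finset.mem_range.mpr (Nat.pos_of_ne_zero hm)) (by simp)]
  simp

lemma genBinom_reflect (u : ℂ) (m : ℕ) :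
    genBinom (-1-u) m = (-1)^m * genBinom (u + m) m := by
  unfold genBinom
  rw [← mul_div_assoc]
  congr 1 <;> try rfl
  have : ∏ i ∈ Finset.range m, (u + m - i) = ∏ i ∈ Finset.range m, (u + 1 + i) := by
    rw [← Finset.prod_range_reflect]
    apply Finset.prod_congr rfl
    intro i hi
    have hi' : i ≤ m - 1 := Nat.le_sub_one_of_lt (Finset.mem_range.mp hi)
    have hm : 1 ≤ m := Nat.one_le_of_lt (Nat.lt_of_le_of_lt (Nat.zero_le i) (Finset.mem_range.mp hi))
    rw [Nat.cast_sub hi', Nat.cast_sub hm]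
    push_cast
    ring
  have h2 : ∏ i ∈ Finset.range m, (-1 - u - (i:ℂ)) =
      ∏ i ∈ Finset.range m, ((-1) * (u + 1 + i)) := by
    apply Finset.prod_congr rfl
    intro i _
    ring
  rw [this, h2, Finset.prod_mul_distrib, Finset.prod_const, Finset.card_range]

lemma genBinom_mul (u : ℂ) (k m : ℕ) :
    genBinom u k * genBinom (u + m) m = ((k+m).choose k : ℂ) * genBinom (u + m) (k + m) := by
  have hprod : ∏ i ∈ Finset.range (m + k), (u + m - i) =
      (∏ i ∈ Finset.range m, (u + m - i)) * ∏ i ∈ Finset.range k, (u - i) := by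
    rw [Finset.prod_range_add]
    congr 1
    apply Finset.prod_congr rfl
    intro i _
    push_cast
    ring
  have hfac : ((k+m).choose k * k.factorial * m.factorial : ℂ) = ((k+m).factorial : ℂ) := by
    have h := Nat.choose_mul_factorial_mul_factorial (Nat.le_add_right k m)
    rw [Nat.add_sub_cancel_left] at h
    exact_mod_cast congrArg Nat.cast h
  unfold genBinom
  rw [show k + m = m + k from Nat.add_comm k m] at *
  rw [hprod]
  have h1 : (k.factorial : ℂ) ≠ 0 := Nat.cast_ne_zero.mpr k.factorial_ne_zero
  have h2 : (m.factorial : ℂ) ≠ 0 := Nat.cast_ne_zero.mpr m.factorial_ne_zero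
  have h3 : ((m+k).factorial : ℂ) ≠ 0 := Nat.cast_ne_zero.mpr (m+k).factorial_ne_zero
  field_simp
  rw [← hfac]
  ring



lemma alt_sum_step (n : ℕ) (f : ℕ → ℂ) :
    ∑ k ∈ Finset.range (n+2), (-1 : ℂ)^(n+1-k) * ((n+1).choose k : ℂ) * f k =
      ∑ k ∈ Finset.range (n+1), (-1 : ℂ)^(n-k) * (n.choose k : ℂ) * (f (k+1) - f k) := by
  have key : ∑ k ∈ Finset.range (n+2), (-1 : ℂ)^(n+1-k) * ((n : ℕ).choose k : ℂ) * f k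
      = - ∑ k ∈ Finset.range (n+1), (-1 : ℂ)^(n-k) * (n.choose k : ℂ) * f k := by
    rw [Finset.sum_range_succ, Nat.choose_succ_self]
    rw [← Finset.sum_neg_distrib]
    simp only [Nat.cast_zero, mul_zero, zero_mul, add_zero]
    apply Finset.sum_congr rfl
    intro k hk
    have h1 : n + 1 - k = (n - k) + 1 := by
      have := Finset.mem_range.mp hk; omega
    rw [h1]
    ring
  have peel : ∑ k ∈ Finset.range (n+2), (-1 : ℂ)^(n+1-k) * ((n : ℕ).choose k : ℂ) * f k
      = (∑ k ∈ Finset.range (n+1), (-1 : ℂ)^(n-k) * (n.choose (k+1) : ℂ) * f (k+1))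
        + (-1 : ℂ)^(n+1) * f 0 := by
    rw [Finset.sum_range_succ' (fun k => (-1 : ℂ)^(n+1-k) * ((n : ℕ).choose k : ℂ) * f k) (n+1)]
    simp only [Nat.sub_zero, Nat.choose_zero_right, Nat.cast_one, mul_one, Nat.cast_zero]
    congr 1
    apply Finset.sum_congr rfl
    intro k hk
    have h1 : n + 1 - (k + 1) = n - k := by omega
    rw [h1]
  rw [Finset.sum_range_succ' (fun k => (-1 : ℂ)^(n+1-k) * (((n+1) : ℕ).choose k : ℂ) * f k) (n+1)]
  have hT : ∀ k ∈ Finset.range (n+1),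
      (-1 : ℂ)^(n+1-(k+1)) * (((n+1)).choose (k+1) : ℂ) * f (k+1)
      = (-1 : ℂ)^(n-k) * ((n.choose k : ℂ)) * f (k+1)
        + (-1 : ℂ)^(n-k) * ((n.choose (k+1) : ℂ)) * f (k+1) := by
    intro k hk
    have h1 : n + 1 - (k+1) = n - k := by omega
    rw [h1, Nat.choose_succ_succ]
    push_cast
    ring
  rw [Finset.sum_congr rfl hT, Finset.sum_add_distrib]
  have hRHS : ∑ k ∈ Finset.range (n+1), (-1 : ℂ)^(n-k) * (n.choose k : ℂ) * (f (k+1) - f k)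
      = ∑ k ∈ Finset.range (n+1), (-1 : ℂ)^(n-k) * (n.choose k : ℂ) * f (k+1)
        - ∑ k ∈ Finset.range (n+1), (-1 : ℂ)^(n-k) * (n.choose k : ℂ) * f k := by
    rw [← Finset.sum_sub_distrib]
    apply Finset.sum_congr rfl
    intro k _
    ring
  rw [hRHS]
  have hmid : ∑ k ∈ Finset.range (n+1), (-1 : ℂ)^(n-k) * ((n.choose (k+1) : ℂ)) * f (k+1)
      = - (∑ k ∈ Finset.range (n+1), (-1 : ℂ)^(n-k) * (n.choose k : ℂ) * f k)
        - (-1 : ℂ)^(n+1) * f 0 := by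
    have := peel.symm.trans key
    linear_combination this
  simp only [Nat.sub_zero, Nat.choose_zero_right, Nat.cast_one, mul_one, Nat.cast_zero]
  rw [hmid]
  ring

open Polynomial


lemma linprod_natDegree (a : ℕ → ℂ) (b : ℂ) (n : ℕ) :
    (∏ i ∈ Finset.range n, (C (a i) + C b * X)).natDegree ≤ n := by
  apply le_trans (Polynomial.natDegree_prod_le _ _)
  apply le_trans (Finset.sum_le_sum (fun i _ => ?_))
  · rw [Finset.sum_const, smul_eq_mul, mul_one, Finset.card_range]
  · exact (le_trans (Polynomial.natDegree_add_le _ _)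
      (by simp only [Polynomial.natDegree_C, max_le_iff]
          exact ⟨Nat.zero_le 1, le_trans (Polynomial.natDegree_C_mul_le _ _) Polynomial.natDegree_X_le⟩) :
      (C (a i) + C b * X).natDegree ≤ 1)

lemma linprod_coeff (a : ℕ → ℂ) (b : ℂ) (n : ℕ) :
    (∏ i ∈ Finset.range n, (C (a i) + C b * X)).coeff n = b ^ n := by
  induction n with
  | zero => simp
  | succ n ih =>
    rw [Finset.prod_range_succ, mul_add, mul_comm _ (C b * X), mul_assoc]
    rw [Polynomial.coeff_add, Polynomial.coeff_C_mul, Polynomial.coeff_X_mul, ih,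
      Polynomial.coeff_mul_C,
      Polynomial.coeff_eq_zero_of_natDegree_lt (lt_of_le_of_lt (linprod_natDegree a b n) (Nat.lt_succ_self n))]
    ring

lemma findiff (n : ℕ) : ∀ p : Polynomial ℂ, p.natDegree ≤ n →
    ∑ k ∈ Finset.range (n+1), (-1 : ℂ)^(n-k) * (n.choose k : ℂ) * p.eval (k : ℂ) =
      (n.factorial : ℂ) * p.coeff n := by
  induction n with
  | zero =>
    intro p hp
    rw [Polynomial.eq_C_of_natDegree_le_zero hp]
    simp
  | succ n ih =>
    intro p hp
    set q : Polynomial ℂ := p.comp (X + 1) - p with hq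
    have hqeval : ∀ t : ℂ, q.eval t = p.eval (t + 1) - p.eval t := by
      intro t; simp [hq]
    have hps : p = ∑ j ∈ Finset.range (n+2), C (p.coeff j) * X ^ j := by
      conv_lhs => rw [Polynomial.as_sum_range' p (n+2) (Nat.lt_succ_of_le hp)]
      simp [Polynomial.C_mul_X_pow_eq_monomial]
    -- coefficients of q
    have hcoeff : ∀ m : ℕ, q.coeff m =
        ∑ j ∈ Finset.range (n+2), p.coeff j * ((j.choose m : ℂ) - if m = j then 1 else 0) := by
      intro m
      have h1 : q.coeff m = (p.comp (X+1)).coeff m - p.coeff m := by rw [hq, Polynomial.coeff_sub]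
      rw [h1]
      have h2 : (p.comp (X+1)).coeff m = ∑ j ∈ Finset.range (n+2), p.coeff j * (j.choose m : ℂ) := by
        conv_lhs => rw [hps]
        rw [Polynomial.sum_comp, Polynomial.finset_sum_coeff]
        apply Finset.sum_congr rfl
        intro j _
        rw [Polynomial.mul_comp, Polynomial.C_comp, Polynomial.pow_comp, Polynomial.X_comp,
          Polynomial.coeff_C_mul, add_comm X 1, ← Polynomial.coeff_X_add_one_pow ℂ j m,
          add_comm 1 X]
      have h3 : p.coeff m = ∑ j ∈ Finset.range (n+2), p.coeff j * (if m = j then 1 else 0) := by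
        conv_lhs => rw [hps]
        rw [Polynomial.finset_sum_coeff]
        apply Finset.sum_congr rfl
        intro j _
        rw [Polynomial.coeff_C_mul, Polynomial.coeff_X_pow]
      rw [h2, h3, ← Finset.sum_sub_distrib]
      apply Finset.sum_congr rfl
      intro j _
      ring
    have hqdeg : q.natDegree ≤ n := by
      rw [Polynomial.natDegree_le_iff_coeff_eq_zero]
      intro m hm
      rw [hcoeff m]
      apply Finset.sum_eq_zero
      intro j hj
      have hj2 : j < n + 2 := Finset.mem_range.mp hj
      rcases Nat.lt_or_ge j m with h | h
      · rw [Nat.choose_eq_zero_of_lt h]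
        simp [Nat.ne_of_gt h]
      · have : j = m := le_antisymm (by omega) h
        subst this
        simp [Nat.choose_self]
    have hqcoeffn : q.coeff n = (n+1 : ℂ) * p.coeff (n+1) := by
      rw [hcoeff n, Finset.sum_range_succ, Finset.sum_range_succ]
      have : ∑ j ∈ Finset.range n, p.coeff j * ((j.choose n : ℂ) - if n = j then 1 else 0) = 0 := by
        apply Finset.sum_eq_zero
        intro j hj
        have := Finset.mem_range.mp hj
        rw [Nat.choose_eq_zero_of_lt this]
        simp [Nat.ne_of_gt this]
      rw [this, Nat.choose_self, Nat.choose_succ_self_right]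
      simp [Nat.ne_of_gt (Nat.lt_succ_self n)]
      ring
    have hsum : ∑ k ∈ Finset.range (n+2), (-1 : ℂ)^(n+1-k) * ((n+1).choose k : ℂ) * p.eval (k : ℂ)
        = ∑ k ∈ Finset.range (n+1), (-1 : ℂ)^(n-k) * (n.choose k : ℂ) * q.eval (k : ℂ) := by
      rw [alt_sum_step n (fun k : ℕ => p.eval (k : ℂ))]
      apply Finset.sum_congr rfl
      intro k _
      rw [hqeval]
      push_cast
      ring
    rw [hsum, ih q hqdeg, hqcoeffn, Nat.factorial_succ]
    push_cast
    ring

lemma periodic_poly_const (p : Polynomial ℂ) (h : ∀ t : ℂ, p.eval (t + 1) = p.eval t)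
    (a b : ℂ) : p.eval a = p.eval b := by
  have hnat : ∀ m : ℕ, p.eval (m : ℂ) = p.eval 0 := by
    intro m
    induction m with
    | zero => simp
    | succ m ih => rw [Nat.cast_succ, h, ih]
  have hq : p - C (p.eval 0) = 0 := by
    apply Polynomial.eq_zero_of_infinite_isRoot
    apply Set.Infinite.mono (s := Set.range (fun m : ℕ => (m : ℂ)))
    · rintro t ⟨m, rfl⟩
      simp [Polynomial.IsRoot, hnat m]
    · exact Set.infinite_range_of_injective Nat.cast_injective
  have : p = C (p.eval 0) := by linear_combination (norm := ring_nf) hq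
  rw [this]
  simp

lemma key_eval (x z : ℂ) (n : ℕ) :
    ∑ k ∈ Finset.range (n+1), genBinom (x + k*z) k * genBinom (-1 - x - k*z) (n-k)
      = (z-1)^n := by
  set P : Polynomial ℂ := C ((n.factorial : ℂ)⁻¹) * ∏ i ∈ Finset.range n, (C (x + n - i) + C (z-1) * X) with hP
  have hPdeg : P.natDegree ≤ n :=
    le_trans (Polynomial.natDegree_C_mul_le _ _) (linprod_natDegree _ _ _)
  have hPcoeff : P.coeff n = (n.factorial : ℂ)⁻¹ * (z-1)^n := by
    rw [hP, Polynomial.coeff_C_mul, linprod_coeff]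
  have hPeval : ∀ k : ℕ, P.eval (k : ℂ) = genBinom (x + n + k*(z-1)) n := by
    intro k
    rw [hP]
    simp only [Polynomial.eval_mul, Polynomial.eval_C, Polynomial.eval_prod,
      Polynomial.eval_add, Polynomial.eval_X]
    rw [genBinom, div_eq_mul_inv, mul_comm]
    congr 1
    apply Finset.prod_congr rfl
    intro i _
    ring
  have hterm : ∀ k ∈ Finset.range (n+1),
      genBinom (x + k*z) k * genBinom (-1 - x - k*z) (n-k)
      = (-1 : ℂ)^(n-k) * (n.choose k : ℂ) * P.eval (k : ℂ) := by
    intro k hk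
    have hkn : k ≤ n := Nat.lt_succ_iff.mp (Finset.mem_range.mp hk)
    have h1 : (-1 : ℂ) - x - k*z = -1 - (x + k*z) := by ring
    rw [h1, genBinom_reflect (x + k*z) (n-k)]
    have h2 : genBinom (x + k*z) k * genBinom (x + k*z + (n-k : ℕ)) (n-k)
        = ((k + (n-k)).choose k : ℂ) * genBinom (x + k*z + (n-k : ℕ)) (k + (n-k)) :=
      genBinom_mul (x + k*z) k (n-k)
    have h3 : k + (n - k) = n := by omega
    rw [h3] at h2
    have h4 : x + k*z + ((n-k : ℕ) : ℂ) = x + n + k*(z-1) := by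
      rw [Nat.cast_sub hkn]
      ring
    rw [h4] at h2
    rw [hPeval k, h4]
    linear_combination (-1:ℂ)^(n-k) * h2
  rw [Finset.sum_congr rfl hterm, findiff n P hPdeg, hPcoeff]
  have : (n.factorial : ℂ) ≠ 0 := Nat.cast_ne_zero.mpr n.factorial_ne_zero
  field_simp

noncomputable def Sj (n : ℕ) (x y z : ℂ) : ℂ :=
  ∑ k ∈ Finset.range (n + 1), genBinom (x + k * z) k * genBinom (y - k * z) (n - k)

noncomputable def Rj (n : ℕ) (x y z : ℂ) : ℂ :=
  ∑ i ∈ Finset.range (n + 1), genBinom (x + y + 1) (n - i) * (z - 1) ^ i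

lemma Sj_rec (x y z : ℂ) (n : ℕ) :
    Sj (n+1) x y z = Sj (n+1) x (y-1) z + Sj n x (y-1) z := by
  unfold Sj
  rw [Finset.sum_range_succ, Finset.sum_range_succ
    (fun k => genBinom (x + k * z) k * genBinom (y - 1 - k * z) (n + 1 - k)) (n+1)]
  simp only [Nat.sub_self, genBinom_zero, mul_one]
  have hterm : ∀ k ∈ Finset.range (n+1),
      genBinom (x + k * z) k * genBinom (y - k * z) (n + 1 - k)
      = genBinom (x + k * z) k * genBinom (y - 1 - k * z) (n + 1 - k)
        + genBinom (x + k * z) k * genBinom (y - 1 - k * z) (n - k) := by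
    intro k hk
    have h1 : n + 1 - k = (n - k) + 1 := by
      have := Finset.mem_range.mp hk; omega
    have h2 : y - 1 - (k:ℂ) * z = y - (k:ℂ)*z - 1 := by ring
    rw [h1, h2, genBinom_pascal]
    ring
  rw [Finset.sum_congr rfl hterm, Finset.sum_add_distrib]
  ring

lemma Rj_rec (x y z : ℂ) (n : ℕ) :
    Rj (n+1) x y z = Rj (n+1) x (y-1) z + Rj n x (y-1) z := by
  unfold Rj
  rw [Finset.sum_range_succ, Finset.sum_range_succ
    (fun i => genBinom (x + (y-1) + 1) (n + 1 - i) * (z-1) ^ i) (n+1)]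
  simp only [Nat.sub_self, genBinom_zero, one_mul]
  have hterm : ∀ i ∈ Finset.range (n+1),
      genBinom (x + y + 1) (n + 1 - i) * (z-1) ^ i
      = genBinom (x + (y-1) + 1) (n + 1 - i) * (z-1) ^ i
        + genBinom (x + (y-1) + 1) (n - i) * (z-1) ^ i := by
    intro i hi
    have h1 : n + 1 - i = (n - i) + 1 := by
      have := Finset.mem_range.mp hi; omega
    have h2 : x + (y - 1) + 1 = (x + y + 1) - 1 := by ring
    rw [h1, h2, genBinom_pascal]
    ring
  rw [Finset.sum_congr rfl hterm, Finset.sum_add_distrib]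
  ring

lemma jensen_aux (n : ℕ) (x y z : ℂ) : Sj n x y z = Rj n x y z := by
  induction n generalizing y with
  | zero => simp [Sj, Rj]
  | succ n ih =>
    set p : Polynomial ℂ :=
      (∑ k ∈ Finset.range (n+2),
        C (genBinom (x + k*z) k * (((n+1-k).factorial : ℂ))⁻¹) *
          ∏ i ∈ Finset.range (n+1-k), (X - C ((k:ℂ)*z + i)))
      - ∑ i ∈ Finset.range (n+2),
          C ((((n+1-i).factorial : ℂ))⁻¹ * (z-1)^i) *
            ∏ j ∈ Finset.range (n+1-i), (X + C (x + 1 - j)) with hp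
    have hpe : ∀ t : ℂ, p.eval t = Sj (n+1) x t z - Rj (n+1) x t z := by
      intro t
      rw [hp]
      simp only [Polynomial.eval_sub, Polynomial.eval_finset_sum, Polynomial.eval_mul,
        Polynomial.eval_C, Polynomial.eval_prod, Polynomial.eval_add, Polynomial.eval_X]
      unfold Sj Rj genBinom
      congr 1
      · apply Finset.sum_congr rfl
        intro k _
        rw [div_eq_mul_inv]
        rw [show ∏ i ∈ Finset.range (n+1-k), (t - ((k:ℂ)*z + i))
          = ∏ i ∈ Finset.range (n+1-k), (t - (k:ℂ)*z - i) from
          Finset.prod_congr rfl (fun i _ => by ring)]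
        ring
      · apply Finset.sum_congr rfl
        intro i _
        rw [div_eq_mul_inv]
        rw [show ∏ j ∈ Finset.range (n+1-i), (t + (x + 1 - j))
          = ∏ j ∈ Finset.range (n+1-i), (x + t + 1 - j) from
          Finset.prod_congr rfl (fun j _ => by ring)]
        ring
    have hper : ∀ t : ℂ, p.eval (t + 1) = p.eval t := by
      intro t
      rw [hpe, hpe, Sj_rec, Rj_rec, ih (t+1-1)]
      rw [show t + 1 - 1 = t from by ring]
      ring
    have hconst := periodic_poly_const p hper y (-1 - x)
    rw [hpe, hpe] at hconst
    have hS : Sj (n+1) x (-1-x) z = (z-1)^(n+1) := by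
      unfold Sj
      exact key_eval x z (n+1)
    have hR : Rj (n+1) x (-1-x) z = (z-1)^(n+1) := by
      unfold Rj
      rw [Finset.sum_eq_single (n+1)]
      · rw [show x + (-1 - x) + 1 = (0 : ℂ) from by ring, Nat.sub_self, genBinom_zero, one_mul]
      · intro i hi hne
        rw [show x + (-1 - x) + 1 = (0 : ℂ) from by ring,
          genBinom_zero_left _ (by have := Finset.mem_range.mp hi; omega), zero_mul]
      · intro h
        exact absurd (Finset.self_mem_range_succ (n+1)) h
    rw [hS, hR, sub_self] at hconst
    exact sub_eq_zero.mp hconst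
    
theorem jensen_variant (x y z : ℂ) (n : ℕ) :
    ∑ k ∈ Finset.range (n + 1), genBinom (x + k * z) k * genBinom (y - k * z) (n - k) =
      ∑ i ∈ Finset.range (n + 1), genBinom (x + y + 1) (n - i) * (z - 1) ^ i :=
  jensen_aux n x y z
end

section
/- (Sun's identity) For all natural numbers m, n, a and every complex number x, the sum over k from 0 to m of (−1)^{m−k}·binom(m,k)·binom(n+k,a)·(1+x)^{n+k−a} equals the sum over k from 0 to n of binom(n,k)·binom(m+k,a)·x^{m+k−a}, where binom denotes the ordinary binomial coefficient of natural numbers (equal to 0 when the lower index exceeds the upper index), and where a ≤ m and a ≤ n so that all exponents are natural numbers. -/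
open Polynomial Finset

/-- Sun's identity. -/
theorem sun_identity (m n a : ℕ) (ham : a ≤ m) (han : a ≤ n) (x : ℂ) :
    ∑ k ∈ Finset.range (m + 1),
        (-1 : ℂ) ^ (m - k) * (m.choose k : ℂ) * ((n + k).choose a : ℂ) *
          (1 + x) ^ (n + k - a) =
      ∑ k ∈ Finset.range (n + 1),
        (n.choose k : ℂ) * ((m + k).choose a : ℂ) * x ^ (m + k - a) := by
  set Y : ℂ[X] := X + C (1 + x) with hY
  set Z : ℂ[X] := X + C x with hZ
  have hcY : ∀ j, (Y ^ j).coeff a = (1 + x) ^ (j - a) * (j.choose a : ℂ) := fun j =>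
    coeff_X_add_C_pow _ _ _
  have hcZ : ∀ j, (Z ^ j).coeff a = x ^ (j - a) * (j.choose a : ℂ) := fun j =>
    coeff_X_add_C_pow _ _ _
  have hYZ : Z = Y - 1 := by
    rw [hY, hZ, C_add, C_1]
    ring
  have key : Y ^ n * Z ^ m =
      ∑ k ∈ Finset.range (m + 1),
        C ((-1 : ℂ) ^ (m - k) * (m.choose k : ℂ)) * Y ^ (n + k) := by
    rw [hYZ, sub_pow]
    rw [Finset.mul_sum]
    refine Finset.sum_congr rfl fun k hk => ?_
    have hpar : ((-1 : ℂ[X])) ^ (k + m) = ((-1 : ℂ[X])) ^ (m - k) := by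
      rw [Finset.mem_range] at hk
      have : k + m = (m - k) + 2 * k := by omega
      rw [this, pow_add]
      simp [pow_mul]
    rw [hpar]
    simp only [C_mul, C_pow, map_neg, map_one, map_natCast]
    ring
  have key2 : Z ^ m * Y ^ n =
      ∑ k ∈ Finset.range (n + 1),
        C ((n.choose k : ℂ)) * Z ^ (m + k) := by
    have hZY : Y = Z + 1 := by rw [hYZ]; ring
    rw [hZY, add_pow Z 1 n, Finset.mul_sum]
    refine Finset.sum_congr rfl fun k hk => ?_
    simp only [one_pow, map_natCast]
    ring
  have := congrArg (fun p => p.coeff a) (key.symm.trans ((mul_comm (Y ^ n) (Z ^ m)).trans key2))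
  simp only [finset_sum_coeff, coeff_C_mul, hcY, hcZ] at this
  calc ∑ k ∈ Finset.range (m + 1),
        (-1 : ℂ) ^ (m - k) * (m.choose k : ℂ) * ((n + k).choose a : ℂ) *
          (1 + x) ^ (n + k - a)
      = ∑ k ∈ Finset.range (m + 1),
        (-1 : ℂ) ^ (m - k) * (m.choose k : ℂ) * ((1 + x) ^ (n + k - a) * ((n + k).choose a : ℂ)) := by
        refine Finset.sum_congr rfl fun k _ => ?_; ring
    _ = ∑ k ∈ Finset.range (n + 1),
        (n.choose k : ℂ) * (x ^ (m + k - a) * ((m + k).choose a : ℂ)) := this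
    _ = ∑ k ∈ Finset.range (n + 1),
        (n.choose k : ℂ) * ((m + k).choose a : ℂ) * x ^ (m + k - a) := by
        refine Finset.sum_congr rfl fun k _ => ?_; ring
end

section
/- (Simons' identity) For every natural number n and every complex number x, the sum over k from 0 to n of (−1)^{n−k}·binom(n,k)·binom(n+k,k)·(1+x)^k equals the sum over k from 0 to n of binom(n,k)·binom(n+k,k)·x^k, where binom denotes the ordinary binomial coefficient of natural numbers. -/
/-!
Expanding `(1 + x)^k` binomially and swapping the sums, the coefficient of `x^j` on the left is
`∑ₖ (-1)^(n-k) C(n,k) C(n+k,k) C(k,j)`. Since `C(n,k) C(k,j) = C(n,j) C(n-j,k-j)`, this is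
`C(n,j)` times the `(n-j)`-th forward difference of `y ↦ C(y,n)` at `y = n + j`, and that
difference is `C(n+j, j)`.
-/

open Finset

theorem sum_range_neg_one_pow_mul_choose_mul_choose_add (m j y : ℕ) :
    ∑ i ∈ range (m + 1), (-1 : ℤ) ^ (m - i) * m.choose i * (y + i).choose (m + j) =
      y.choose j := by
  have h := congrFun (fwdDiff_iter_choose j m) y
  rw [fwdDiff_iter_eq_sum_shift] at h
  simpa only [smul_eq_mul, mul_one] using h

theorem sum_range_neg_one_pow_mul_choose_mul_choose_add_mul_choose {n j : ℕ} (hjn : j ≤ n) :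
    ∑ k ∈ range (n + 1), (-1 : ℤ) ^ (n - k) * n.choose k * (n + k).choose k * k.choose j =
      n.choose j * (n + j).choose j := by
  obtain ⟨m, rfl⟩ := Nat.exists_eq_add_of_le hjn
  rw [show j + m + 1 = j + (m + 1) by omega, sum_range_add,
    sum_eq_zero fun k hk => by simp [Nat.choose_eq_zero_of_lt (mem_range.1 hk)], zero_add]
  calc
    _ = ∑ i ∈ range (m + 1), ((j + m).choose j : ℤ) *
          ((-1) ^ (m - i) * m.choose i * (j + m + j + i).choose (m + j)) := by
      refine sum_congr rfl fun i _ => ?_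
      have hsign : j + m - (j + i) = m - i := by omega
      have hchoose : ((j + m).choose (j + i) * (j + i).choose j : ℤ) =
          (j + m).choose j * m.choose i := by
        exact_mod_cast by simpa using Nat.choose_mul (n := j + m) (Nat.le_add_right j i)
      have hsymm : (j + m + (j + i)).choose (j + i) = (j + m + j + i).choose (m + j) := by
        rw [← Nat.choose_symm_add, add_comm j m, ← add_assoc]
      rw [hsign, hsymm]
      linear_combination ((-1 : ℤ) ^ (m - i) * (j + m + j + i).choose (m + j)) * hchoose
    _ = _ := by rw [← mul_sum, sum_range_neg_one_pow_mul_choose_mul_choose_add]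

theorem one_add_pow_eq_sum_range {R : Type*} [CommSemiring R] (x : R) {k N : ℕ} (hkN : k ≤ N) :
    (1 + x) ^ k = ∑ j ∈ range (N + 1), x ^ j * k.choose j := by
  rw [add_comm, add_pow]
  simp only [one_pow, mul_one]
  refine sum_subset (range_subset_range.2 (by omega)) fun j _ hj => ?_
  rw [Nat.choose_eq_zero_of_lt (by simpa using hj), Nat.cast_zero, mul_zero]

theorem sum_range_neg_one_pow_mul_choose_mul_choose_add_mul_one_add_pow {R : Type*} [CommRing R]
    (n : ℕ) (x : R) :
    ∑ k ∈ range (n + 1), (-1 : R) ^ (n - k) * n.choose k * (n + k).choose k * (1 + x) ^ k =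
      ∑ k ∈ range (n + 1), (n.choose k : R) * (n + k).choose k * x ^ k := by
  calc
    _ = ∑ k ∈ range (n + 1), ∑ j ∈ range (n + 1),
          (-1 : R) ^ (n - k) * n.choose k * (n + k).choose k * (x ^ j * k.choose j) :=
      sum_congr rfl fun k hk => by
        rw [one_add_pow_eq_sum_range x (mem_range_succ_iff.1 hk), mul_sum]
    _ = ∑ j ∈ range (n + 1), ((∑ k ∈ range (n + 1),
          (-1 : ℤ) ^ (n - k) * n.choose k * (n + k).choose k * k.choose j : ℤ) : R) * x ^ j := by
      rw [sum_comm]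
      refine sum_congr rfl fun j _ => ?_
      push_cast
      rw [sum_mul]
      exact sum_congr rfl fun k _ => by ring
    _ = _ := sum_congr rfl fun j hj => by
      rw [sum_range_neg_one_pow_mul_choose_mul_choose_add_mul_choose (mem_range_succ_iff.1 hj)]
      push_cast
      rfl

/-- Simons' identity. -/
theorem simons_identity (n : ℕ) (x : ℂ) :
    ∑ k ∈ Finset.range (n + 1),
        (-1 : ℂ) ^ (n - k) * (n.choose k : ℂ) * ((n + k).choose k : ℂ) * (1 + x) ^ k =
      ∑ k ∈ Finset.range (n + 1), (n.choose k : ℂ) * ((n + k).choose k : ℂ) * x ^ k :=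
  sum_range_neg_one_pow_mul_choose_mul_choose_add_mul_one_add_pow n x
end

section
/- (Multinomial Chu–Vandermonde convolution) Let m be a positive integer, let n ∈ ℕ^m, and let x, y be complex numbers. Then the sum, over all k ∈ ℕ^m with k_i ≤ n_i for each i, of C(x, k)·C(y, n−k), equals C(x+y, n). -/
/-- The multinomial coefficient `C(x, n) = x(x-1)⋯(x-|n|+1)/(n₁!⋯n_m!)` for `x : ℂ`
and `n ∈ ℕ^m`, where `|n| = n₁ + ⋯ + n_m`. -/
noncomputable def multiBinom {m : ℕ} (x : ℂ) (n : Fin m → ℕ) : ℂ :=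
  (∏ i ∈ Finset.range (∑ j, n j), (x - i)) / ((∏ j, Nat.factorial (n j) : ℕ) : ℂ)

open Finset in
lemma desc_smeval (x : ℂ) (k : ℕ) :
    (descPochhammer ℤ k).smeval x = ∏ i ∈ Finset.range k, (x - i) := by
  induction k with
  | zero => simp [descPochhammer_zero, Polynomial.smeval_one]
  | succ k ih =>
      rw [descPochhammer_succ_right, Polynomial.smeval_mul, ih, Finset.prod_range_succ]
      congr 1
      simp [Polynomial.smeval_sub, Polynomial.smeval_X, Polynomial.smeval_natCast]

lemma gen_vandermonde {ι : Type*} [DecidableEq ι] (s : Finset ι) (n : ι → ℕ) (t : ℕ) :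
    ∑ k ∈ s.piAntidiag t, ∏ i ∈ s, (n i).choose (k i) = (∑ i ∈ s, n i).choose t := by
  induction s using Finset.cons_induction generalizing t with
  | empty =>
      rw [Finset.piAntidiag_empty]
      rcases eq_or_ne t 0 with rfl | ht
      · simp
      · simp [ht, Nat.choose_eq_zero_of_lt (Nat.pos_of_ne_zero ht)]
  | cons i s hi ih =>
      rw [Finset.piAntidiag_cons hi, Finset.sum_disjiUnion, Finset.sum_cons,
        Nat.add_choose_eq]
      refine Finset.sum_congr rfl fun p hp => ?_
      rw [Finset.sum_map]
      have : ∀ g ∈ s.piAntidiag p.2,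
          ∏ j ∈ Finset.cons i s hi, (n j).choose ((addRightEmbedding
            fun t ↦ if t = i then p.1 else 0) g j)
          = (n i).choose p.1 * ∏ j ∈ s, (n j).choose (g j) := by
        intro g hg
        rw [Finset.mem_piAntidiag] at hg
        rw [Finset.prod_cons]
        have hgi : g i = 0 := by
          by_contra h
          exact hi (hg.2 i h)
        congr 1
        · simp [addRightEmbedding, hgi]
        · refine Finset.prod_congr rfl fun j hj => ?_
          have : j ≠ i := fun h => hi (h ▸ hj)
          simp [addRightEmbedding, this]
      rw [Finset.sum_congr rfl this, ← Finset.mul_sum, ih]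

lemma vand_filter (m : ℕ) (n : Fin m → ℕ) (t : ℕ) :
    ∑ k ∈ (Finset.Iic n).filter (fun k => ∑ j, k j = t), ∏ j, (n j).choose (k j)
      = (∑ j, n j).choose t := by
  rw [← gen_vandermonde Finset.univ n t]
  apply Finset.sum_subset
  · intro k hk
    rw [Finset.mem_filter] at hk
    rw [Finset.mem_piAntidiag]
    exact ⟨hk.2, fun i _ => Finset.mem_univ i⟩
  · intro k hk hk'
    rw [Finset.mem_piAntidiag] at hk
    rw [Finset.mem_filter, not_and] at hk'
    have hkn : ¬ k ≤ n := fun h => hk' (Finset.mem_Iic.mpr h) hk.1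
    rw [Pi.le_def, not_forall] at hkn
    obtain ⟨i, hi⟩ := hkn
    exact Finset.prod_eq_zero (Finset.mem_univ i)
      (Nat.choose_eq_zero_of_lt (by omega))

lemma chu (N : ℕ) (x y : ℂ) :
    ∏ i ∈ Finset.range N, (x + y - i)
      = ∑ t ∈ Finset.range (N + 1), (N.choose t : ℂ) *
          ((∏ i ∈ Finset.range t, (x - i)) * ∏ i ∈ Finset.range (N - t), (y - i)) := by
  rw [← desc_smeval, Ring.descPochhammer_smeval_add N (Commute.all x y),
    Finset.Nat.sum_antidiagonal_eq_sum_range_succ_mk]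
  simp [desc_smeval]

/-- The multinomial Chu–Vandermonde convolution. -/
theorem multinomial_chu_vandermonde (m : ℕ) (hm : 0 < m) (n : Fin m → ℕ) (x y : ℂ) :
    ∑ k ∈ Finset.Iic n, multiBinom x k * multiBinom y (n - k) = multiBinom (x + y) n := by
  classical
  set N := ∑ j, n j with hN
  have hmap : ∀ k ∈ Finset.Iic n, (∑ j, k j) ∈ Finset.range (N + 1) := by
    intro k hk
    exact Finset.mem_range.mpr (Nat.lt_succ_of_le
      (Finset.sum_le_sum fun j _ => Pi.le_def.mp (Finset.mem_Iic.mp hk) j))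
  rw [← Finset.sum_fiberwise_of_maps_to hmap
      (fun k => multiBinom x k * multiBinom y (n - k))]
  have key : ∀ t ∈ Finset.range (N + 1),
      ∑ k ∈ (Finset.Iic n).filter (fun k => ∑ j, k j = t),
        multiBinom x k * multiBinom y (n - k)
      = (N.choose t : ℂ) *
          ((∏ i ∈ Finset.range t, (x - i)) * ∏ i ∈ Finset.range (N - t), (y - i))
          / ((∏ j, Nat.factorial (n j) : ℕ) : ℂ) := by
    intro t ht
    have step : ∀ k ∈ (Finset.Iic n).filter (fun k => ∑ j, k j = t),
        multiBinom x k * multiBinom y (n - k)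
        = ((∏ i ∈ Finset.range t, (x - i)) * ∏ i ∈ Finset.range (N - t), (y - i))
            * ((∏ j, (n j).choose (k j) : ℕ) : ℂ)
            / ((∏ j, Nat.factorial (n j) : ℕ) : ℂ) := by
      intro k hk
      rw [Finset.mem_filter, Finset.mem_Iic] at hk
      obtain ⟨hkn, hkt⟩ := hk
      have hsub : ∑ j, (n - k) j = N - t := by
        simp only [Pi.sub_apply]
        rw [Finset.sum_tsub_distrib _ (fun j _ => hkn j), hkt]
      have hfac : (∏ j, Nat.factorial (n j)) =
          (∏ j, (n j).choose (k j)) * (∏ j, Nat.factorial (k j))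
            * (∏ j, Nat.factorial ((n - k) j)) := by
        rw [← Finset.prod_mul_distrib, ← Finset.prod_mul_distrib]
        refine Finset.prod_congr rfl fun j _ => ?_
        rw [Pi.sub_apply]
        exact (Nat.choose_mul_factorial_mul_factorial (hkn j)).symm
      unfold multiBinom
      rw [hkt, hsub, hfac]
      have h1 : ((∏ j, Nat.factorial (k j) : ℕ) : ℂ) ≠ 0 := by
        exact_mod_cast (Finset.prod_pos fun j _ => Nat.factorial_pos _).ne'
      have h2 : ((∏ j, Nat.factorial ((n - k) j) : ℕ) : ℂ) ≠ 0 := by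
        exact_mod_cast (Finset.prod_pos fun j _ => Nat.factorial_pos _).ne'
      have h3 : (∏ i : Fin m, (((n i).choose (k i) : ℕ) : ℂ)) ≠ 0 := by
        rw [Finset.prod_ne_zero_iff]
        intro i _
        exact_mod_cast (Nat.choose_pos (hkn i)).ne'
      push_cast at h1 h2 ⊢
      rw [div_mul_div_comm, div_eq_div_iff (mul_ne_zero h1 h2)
        (mul_ne_zero (mul_ne_zero h3 h1) h2)]
      ring
    rw [Finset.sum_congr rfl step, ← Finset.sum_div, ← Finset.mul_sum,
      ← Nat.cast_sum, vand_filter m n t]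
    ring
  rw [Finset.sum_congr rfl key, ← Finset.sum_div, ← chu]
  rfl
end

section
/- Let m be a positive integer, n ∈ ℕ^m, s ≥ 1 a natural number. Then the sum, over all s-tuples (k_1, …, k_s) of elements of ℕ^m with k_1 + ⋯ + k_s = n (componentwise), of the product over i from 1 to s of the ordinary multinomial coefficient |k_i|!/(k_{i,1}!⋯k_{i,m}!), equals binom(|n|+s−1, |n|) times |n|!/(n_1!⋯n_m!), where |k| denotes the sum of the components of k and binom denotes the ordinary binomial coefficient of natural numbers. -/
/-!
Group the tuples `k` by their degree vector `(|k_1|, …, |k_s|)`, a weak composition of `|n|`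
into `s` parts. Comparing coefficients of `x^n` in
`∏ i, (x_1 + ⋯ + x_m) ^ |k_i| = (x_1 + ⋯ + x_m) ^ |n|` shows that every group contributes the
multinomial coefficient of `n`, and by stars and bars there are `binom(|n| + s - 1, |n|)` groups.
-/

open Finset Fintype MvPolynomial

namespace MvPolynomial

variable {R σ : Type*} [CommSemiring R] [Fintype σ]

theorem coeff_equivFunOnFinite_symm_prod_X_pow (n d : σ → ℕ) :
    coeff (Finsupp.equivFunOnFinite.symm n) (∏ j, (X j : MvPolynomial σ R) ^ d j) =
      if d = n then 1 else 0 := by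
  classical
  have : Finsupp.indicator univ (fun j _ => d j) = Finsupp.equivFunOnFinite.symm d := by
    ext; simp
  simp only [coeff_prod_X_pow, this, Equiv.apply_eq_iff_eq, eq_comm]

theorem coeff_equivFunOnFinite_symm_sum_X_pow (n : σ → ℕ) (p : ℕ) :
    coeff (Finsupp.equivFunOnFinite.symm n) ((∑ j, X j : MvPolynomial σ R) ^ p) =
      if ∑ j, n j = p then (Nat.multinomial univ n : R) else 0 := by
  rw [coeff_sum_X_pow_of_fintype, Finsupp.sum_fintype _ _ (fun _ => rfl),
    Finsupp.multinomial_eq_of_support_subset (subset_univ _)]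
  simp

end MvPolynomial

theorem Nat.multinomial_eq_sum_prod_multinomial {ι σ : Type*} [Fintype ι] [DecidableEq ι]
    [Fintype σ] [DecidableEq σ] (p : ι → ℕ) (n : σ → ℕ) (h : ∑ j, n j = ∑ i, p i) :
    ∑ k ∈ piFinset (fun i => piAntidiag univ (p i)) with ∑ i, k i = n,
        ∏ i, Nat.multinomial univ (k i) = Nat.multinomial univ n := by
  have expand : (∑ j, X j : MvPolynomial σ ℕ) ^ (∑ i, p i) =
      ∑ k ∈ piFinset (fun i => piAntidiag univ (p i)),
        ((∏ i, Nat.multinomial univ (k i) : ℕ) : MvPolynomial σ ℕ) *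
          ∏ j, X j ^ (∑ i, k i j) := by
    rw [← prod_pow_eq_pow_sum]
    simp_rw [sum_pow_eq_sum_piAntidiag]
    rw [prod_univ_sum]
    refine sum_congr rfl fun k _ => ?_
    rw [prod_mul_distrib, Nat.cast_prod, prod_comm]
    simp_rw [prod_pow_eq_pow_sum]
  have hcoeff := congrArg (coeff (Finsupp.equivFunOnFinite.symm n)) expand
  simp only [coeff_equivFunOnFinite_symm_sum_X_pow, h, if_true, coeff_sum, ← C_eq_coe_nat,
    coeff_C_mul, coeff_equivFunOnFinite_symm_prod_X_pow, mul_ite, mul_one, mul_zero,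
    Nat.cast_id] at hcoeff
  rw [hcoeff, sum_filter]
  refine sum_congr rfl fun k _ => ?_
  simp [funext_iff, Finset.sum_apply]

theorem Finset.card_piAntidiag_univ {ι : Type*} [Fintype ι] [DecidableEq ι] (n : ℕ) :
    #(piAntidiag (univ : Finset ι) n) = (n + Fintype.card ι - 1).choose n := by
  rw [← map_sym_eq_piAntidiag, card_map, sym_univ, card_univ, Sym.card_sym_eq_choose, add_comm n]

theorem sum_prod_multinomial_general (m : ℕ) (n : Fin m → ℕ) (s : ℕ) :
    ∑ k ∈ (Finset.Iic (fun _ : Fin s => n)).filter (fun k => ∑ i, k i = n),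
        ∏ i, Nat.multinomial Finset.univ (k i) =
      ((∑ j, n j) + s - 1).choose (∑ j, n j) * Nat.multinomial Finset.univ n := by
  set T := ∑ j, n j
  have degrees_mem : ∀ k ∈ (Iic fun _ : Fin s => n).filter (fun k => ∑ i, k i = n),
      (fun i => ∑ j, k i j) ∈ piAntidiag univ T := by
    intro k hk
    rw [mem_filter] at hk
    simp [mem_piAntidiag, T, ← hk.2, sum_comm (γ := Fin s), Finset.sum_apply]
  have fiber : ∀ p ∈ piAntidiag univ T,
      {k ∈ (Iic fun _ : Fin s => n).filter (fun k => ∑ i, k i = n) |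
          (fun i => ∑ j, k i j) = p} =
        {k ∈ piFinset (fun i => piAntidiag (univ : Finset (Fin m)) (p i)) | ∑ i, k i = n} := by
    intro p _
    ext k
    simp only [mem_filter, mem_Iic, mem_piFinset, mem_piAntidiag, mem_univ, implies_true,
      and_true]
    constructor
    · rintro ⟨⟨-, hk⟩, rfl⟩
      exact ⟨fun i => rfl, hk⟩
    · rintro ⟨hp, hk⟩
      have hle : ∀ i, k i ≤ n := fun i => hk ▸ single_le_sum (fun _ _ => zero_le) (mem_univ i)
      exact ⟨⟨hle, hk⟩, funext hp⟩
  rw [← sum_fiberwise_of_maps_to degrees_mem, Finset.sum_congr rfl fun p hp => by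
    rw [fiber p hp, Nat.multinomial_eq_sum_prod_multinomial p n (mem_piAntidiag.1 hp).1.symm],
    sum_const, smul_eq_mul, card_piAntidiag_univ, Fintype.card_fin]

theorem sum_prod_multinomial (m : ℕ) (hm : 0 < m) (n : Fin m → ℕ) (s : ℕ) (hs : 1 ≤ s) :
    ∑ k ∈ (Finset.Iic (fun _ : Fin s => n)).filter (fun k => ∑ i, k i = n),
        ∏ i, Nat.multinomial Finset.univ (k i) =
      ((∑ j, n j) + s - 1).choose (∑ j, n j) * Nat.multinomial Finset.univ n :=
  sum_prod_multinomial_general m n s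
end

section
/- Let m be a positive integer, n ∈ ℕ^m, s a natural number, x a complex number, and z ∈ ℂ^m. Then the sum, over all k ∈ ℕ^m with k_i ≤ n_i for each i, of C(|k|+s, k)·C(x−|k|, n−k)·z^k, equals the sum over the same range of k of C(|k|+s, k)·C(x+s+1, n−k)·(z−1)^k, where |k| = k_1 + ⋯ + k_m, 1 = (1,…,1), z^k = z_1^{k_1}⋯z_m^{k_m}, and (z−1)^k = (z_1−1)^{k_1}⋯(z_m−1)^{k_m}. -/
open Finset Polynomial Nat

lemma descPochhammer_eval_add (R : Type*) [CommRing R] (x : R) (a b : ℕ) :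
    (descPochhammer R (a + b)).eval x =
      (descPochhammer R a).eval x * (descPochhammer R b).eval (x - a) := by
  rw [← descPochhammer_mul, eval_mul, eval_comp, eval_sub, eval_X, eval_natCast]

lemma descPochhammer_eval_natCast_sub_one_sub (R : Type*) [CommRing R] (x : R) (k : ℕ) :
    (descPochhammer R k).eval (k - 1 - x) = (-1) ^ k * (descPochhammer R k).eval x := by
  rw [descPochhammer_eval_eq_ascPochhammer, ← ascPochhammer_eval_neg_eq_descPochhammer]
  ring_nf

lemma Ring.choose_eq_descPochhammer_div {K : Type*} [Field K] [CharZero K] (x : K) (k : ℕ) :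
    Ring.choose x k = (descPochhammer K k).eval x / k ! := by
  rw [Ring.choose_eq_smul, smul_eq_mul, inv_mul_eq_div, ← aeval_eq_smeval, aeval_def,
    eval₂_eq_eval_map, descPochhammer_map]

lemma prod_add_one_pow_eq_sum_Iic {R ι : Type*} [CommSemiring R] [Fintype ι] [DecidableEq ι]
    (w : ι → R) (k : ι → ℕ) :
    ∏ i, (w i + 1) ^ k i = ∑ l ∈ Iic k, (∏ i, ((k i).choose (l i) : R)) * ∏ i, w i ^ l i := by
  have hIic : Iic k = Fintype.piFinset fun i => Iic (k i) := by
    ext; simp [Pi.le_def]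
  simp_rw [add_pow, one_pow, mul_one, Nat.range_succ_eq_Iic]
  rw [prod_univ_sum, hIic]
  exact sum_congr rfl fun l _ => by rw [prod_mul_distrib, mul_comm]

lemma sum_Iic_sum_Iic_eq_sum_Iic_sum_Iic_tsub {α M : Type*} [AddCommMonoid α] [PartialOrder α]
    [CanonicallyOrderedAdd α] [Sub α] [OrderedSub α] [AddLeftReflectLE α]
    [LocallyFiniteOrderBot α] [AddCommMonoid M] (n : α) (f : α → α → M) :
    ∑ k ∈ Iic n, ∑ l ∈ Iic k, f k l = ∑ l ∈ Iic n, ∑ t ∈ Iic (n - l), f (l + t) l := by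
  rw [sum_sigma', sum_sigma']
  refine sum_nbij' (fun p => ⟨p.2, p.1 - p.2⟩) (fun p => ⟨p.1 + p.2, p.1⟩) ?_ ?_ ?_ ?_ ?_ <;>
    simp only [mem_sigma, mem_Iic, and_imp, Sigma.forall]
  · exact fun k l hk hl => ⟨hl.trans hk, tsub_le_tsub_right hk l⟩
  · exact fun l t hl ht => ⟨add_le_of_le_tsub_left_of_le hl ht, le_self_add⟩
  · exact fun k l _ hl => by rw [add_tsub_cancel_of_le hl]
  · exact fun l t _ _ => by rw [add_tsub_cancel_left]
  · exact fun k l _ hl => by rw [add_tsub_cancel_of_le hl]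

section multiBinom

variable {m : ℕ}

lemma Fin.cons_sub_cons {M : Type*} [Sub M] (a b : M) (u v : Fin m → M) :
    (Fin.cons a u : Fin (m + 1) → M) - Fin.cons b v = Fin.cons (a - b) (u - v) := by
  ext i; refine Fin.cases ?_ ?_ i <;> simp

lemma sum_Iic_cons {M : Type*} [AddCommMonoid M] (c : ℕ) (N : Fin m → ℕ)
    (f : (Fin (m + 1) → ℕ) → M) :
    ∑ t ∈ Iic (Fin.cons c N : Fin (m + 1) → ℕ), f t =
      ∑ u ∈ Iic c, ∑ t ∈ Iic N, f (Fin.cons u t) := by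
  rw [← sum_product']
  refine sum_nbij' (fun t => (t 0, Fin.tail t)) (fun p => Fin.cons p.1 p.2) ?_ ?_ ?_ ?_ ?_ <;>
    simp [Pi.le_def, Fin.forall_fin_succ, Fin.tail]

lemma multiBinom_eq_descPochhammer_div (x : ℂ) (n : Fin m → ℕ) :
    multiBinom x n = (descPochhammer ℂ (∑ j, n j)).eval x / ∏ j, ((n j) ! : ℂ) := by
  rw [multiBinom, descPochhammer_eval_eq_prod_range, Nat.cast_prod]

lemma multiBinom_of_isEmpty (x : ℂ) (n : Fin 0 → ℕ) : multiBinom x n = 1 := by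
  simp [multiBinom]

lemma multiBinom_cons (x : ℂ) (b : ℕ) (a : Fin m → ℕ) :
    multiBinom x (Fin.cons b a) = Ring.choose x b * multiBinom (x - b) a := by
  simp only [multiBinom_eq_descPochhammer_div, Ring.choose_eq_descPochhammer_div,
    Fin.sum_univ_succ, Fin.prod_univ_succ, Fin.cons_zero, Fin.cons_succ, descPochhammer_eval_add]
  rw [mul_div_mul_comm]

lemma multiBinom_eq_neg_one_pow_mul (y : ℂ) (n : Fin m → ℕ) :
    multiBinom y n = (-1) ^ (∑ j, n j) * multiBinom ((∑ j, (n j : ℂ)) - 1 - y) n := by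
  simp only [multiBinom_eq_descPochhammer_div, ← Nat.cast_sum,
    descPochhammer_eval_natCast_sub_one_sub]
  rw [mul_div_assoc', ← mul_assoc, ← pow_add, ← two_mul, pow_mul, neg_one_sq, one_pow, one_mul]

theorem add_multiBinom_eq (a b : ℂ) (N : Fin m → ℕ) :
    multiBinom (a + b) N = ∑ t ∈ Iic N, multiBinom a t * multiBinom b (N - t) := by
  induction m generalizing a b with
  | zero => simp [multiBinom_of_isEmpty, Pi.card_Iic]
  | succ m ih =>
    cases N using Fin.consCases with | cons c N =>
    rw [sum_Iic_cons, multiBinom_cons, Ring.add_choose_eq _ (.all a b),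
      Nat.sum_antidiagonal_eq_sum_range_succ_mk, Nat.range_succ_eq_Iic, sum_mul]
    refine sum_congr rfl fun u hu => ?_
    have hsplit : a + b - c = (a - u) + (b - ↑(c - u)) := by
      rw [Nat.cast_sub (mem_Iic.1 hu)]; ring
    rw [hsplit, ih, mul_sum]
    refine sum_congr rfl fun t _ => ?_
    rw [Fin.cons_sub_cons, multiBinom_cons, multiBinom_cons]
    ring

theorem sum_multiBinom_mul_multiBinom (S x : ℂ) (N : Fin m → ℕ) :
    ∑ t ∈ Iic N, multiBinom ((∑ j, (t j : ℂ)) + S) t * multiBinom (x - ∑ j, (t j : ℂ)) (N - t) =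
      multiBinom (x + S + 1) N := by
  have hsplit : (∑ j, (N j : ℂ)) - 1 - (x + S + 1) = (-1 - S) + ((∑ j, (N j : ℂ)) - 1 - x) := by
    ring
  rw [multiBinom_eq_neg_one_pow_mul (x + S + 1), hsplit, add_multiBinom_eq, mul_sum]
  refine sum_congr rfl fun t ht => ?_
  have hsum : ∑ j, t j + ∑ j, (N - t) j = ∑ j, N j := by
    rw [← sum_add_distrib]
    exact sum_congr rfl fun j _ => Nat.add_sub_cancel' (mem_Iic.1 ht j)
  have hS : (∑ j, (t j : ℂ)) - 1 - ((∑ j, (t j : ℂ)) + S) = -1 - S := by ring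
  have hx : (∑ j, ((N - t) j : ℂ)) - 1 - (x - ∑ j, (t j : ℂ)) = (∑ j, (N j : ℂ)) - 1 - x := by
    linear_combination (by exact_mod_cast hsum :
      (∑ j, (t j : ℂ)) + ∑ j, ((N - t) j : ℂ) = ∑ j, (N j : ℂ))
  rw [multiBinom_eq_neg_one_pow_mul (_ + S), multiBinom_eq_neg_one_pow_mul (x - _), hS, hx,
    ← hsum, pow_add]
  ring

theorem multiBinom_add_mul_prod_choose (y : ℂ) (l t : Fin m → ℕ) :
    multiBinom y (l + t) * ∏ j, (((l + t) j).choose (l j) : ℂ) =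
      multiBinom y t * multiBinom (y - ∑ j, (t j : ℂ)) l := by
  have hfact : ∏ j, (((l + t) j) ! : ℂ) =
      (∏ j, (((l + t) j).choose (l j) : ℂ)) * (∏ j, ((l j) ! : ℂ)) * ∏ j, ((t j) ! : ℂ) := by
    simp only [← prod_mul_distrib, Pi.add_apply]
    refine prod_congr rfl fun j _ => ?_
    rw [Nat.choose_symm_add]
    exact_mod_cast (Nat.add_choose_mul_factorial_mul_factorial (l j) (t j)).symm
  have hsum : ∑ j, (l + t) j = ∑ j, t j + ∑ j, l j := by
    rw [add_comm, ← sum_add_distrib]; rfl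
  have hfact_ne (k : Fin m → ℕ) : ∏ j, ((k j) ! : ℂ) ≠ 0 :=
    prod_ne_zero_iff.2 fun j _ => Nat.cast_ne_zero.2 (Nat.factorial_ne_zero _)
  have hchoose_ne : ∏ j, (((l + t) j).choose (l j) : ℂ) ≠ 0 :=
    prod_ne_zero_iff.2 fun j _ => Nat.cast_ne_zero.2 (Nat.choose_pos (Nat.le_add_right _ _)).ne'
  simp only [multiBinom_eq_descPochhammer_div, hfact, hsum, descPochhammer_eval_add, Nat.cast_sum]
  field_simp [hfact_ne l, hfact_ne t]

lemma multiBinom_mul_multiBinom_mul_prod_choose (s x : ℂ) (n l t : Fin m → ℕ) :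
    multiBinom ((∑ j, ((l + t) j : ℂ)) + s) (l + t) *
        multiBinom (x - ∑ j, ((l + t) j : ℂ)) (n - (l + t)) *
        ∏ j, (((l + t) j).choose (l j) : ℂ) =
      multiBinom ((∑ j, (l j : ℂ)) + s) l *
        (multiBinom ((∑ j, (t j : ℂ)) + ((∑ j, (l j : ℂ)) + s)) t *
          multiBinom (x - ∑ j, (l j : ℂ) - ∑ j, (t j : ℂ)) (n - l - t)) := by
  have hsum : ∑ j, ((l + t) j : ℂ) = ∑ j, (l j : ℂ) + ∑ j, (t j : ℂ) := by
    simp only [Pi.add_apply, Nat.cast_add, sum_add_distrib]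
  rw [mul_right_comm, multiBinom_add_mul_prod_choose, hsum, tsub_add_eq_tsub_tsub n l t]
  ring_nf

end multiBinom

theorem multinomial_ks_identity_general (m : ℕ) (n : Fin m → ℕ) (s : ℕ) (x : ℂ)
    (z : Fin m → ℂ) :
    ∑ k ∈ Finset.Iic n,
        multiBinom ((∑ j, (k j : ℂ)) + s) k * multiBinom (x - ∑ j, (k j : ℂ)) (n - k) *
          ∏ j, z j ^ k j =
      ∑ k ∈ Finset.Iic n,
        multiBinom ((∑ j, (k j : ℂ)) + s) k * multiBinom (x + s + 1) (n - k) *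
          ∏ j, (z j - 1) ^ k j := by
  have hz (k : Fin m → ℕ) : ∏ j, z j ^ k j =
      ∑ l ∈ Iic k, (∏ j, ((k j).choose (l j) : ℂ)) * ∏ j, (z j - 1) ^ l j := by
    simpa only [sub_add_cancel] using prod_add_one_pow_eq_sum_Iic (fun j => z j - 1) k
  simp_rw [hz, mul_sum]
  rw [sum_Iic_sum_Iic_eq_sum_Iic_sum_Iic_tsub]
  refine sum_congr rfl fun l _ => ?_
  simp_rw [← mul_assoc, ← sum_mul, multiBinom_mul_multiBinom_mul_prod_choose, ← mul_sum,
    sum_multiBinom_mul_multiBinom]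
  rw [show x - ∑ j, (l j : ℂ) + (∑ j, (l j : ℂ) + s) + 1 = x + s + 1 by ring]

theorem multinomial_ks_identity (m : ℕ) (hm : 0 < m) (n : Fin m → ℕ) (s : ℕ) (x : ℂ)
    (z : Fin m → ℂ) :
    ∑ k ∈ Finset.Iic n,
        multiBinom ((∑ j, (k j : ℂ)) + s) k * multiBinom (x - ∑ j, (k j : ℂ)) (n - k) *
          ∏ j, z j ^ k j =
      ∑ k ∈ Finset.Iic n,
        multiBinom ((∑ j, (k j : ℂ)) + s) k * multiBinom (x + s + 1) (n - k) *
          ∏ j, (z j - 1) ^ k j :=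
  multinomial_ks_identity_general m n s x z
end

section
/- (Multinomial Munarini identity) Let m be a positive integer, n ∈ ℕ^m, α and β complex numbers, and x ∈ ℂ^m. Then the sum, over all k ∈ ℕ^m with k_i ≤ n_i for each i, of (−1)^{|n|−|k|}·C(β−α+|n|, n−k)·C(β+|k|, k)·(1+x)^k, equals the sum over the same range of k of C(α, n−k)·C(β+|k|, k)·x^k, where |k| = k_1 + ⋯ + k_m, 1 = (1,…,1), x^k = x_1^{k_1}⋯x_m^{k_m}, and (1+x)^k = (1+x_1)^{k_1}⋯(1+x_m)^{k_m}. -/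
open Finset Polynomial

noncomputable def Pfn (x : ℂ) (k : ℕ) : ℂ := ∏ i ∈ Finset.range k, (x - i)
noncomputable def bc (x : ℂ) (k : ℕ) : ℂ := Pfn x k / (k.factorial : ℂ)

lemma Pfn_eq_desc (x : ℂ) (k : ℕ) : Pfn x k = (descPochhammer ℂ k).eval x := by
  induction k with
  | zero => simp [Pfn]
  | succ n ih =>
      rw [Pfn, Finset.prod_range_succ, ← Pfn, ih, descPochhammer_succ_eval]

lemma Pfn_add (x : ℂ) (a b : ℕ) : Pfn x (a + b) = Pfn x a * Pfn (x - a) b := by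
  rw [Pfn, Finset.prod_range_add]
  congr 1
  apply Finset.prod_congr rfl
  intro i _
  push_cast
  ring

lemma bc_eq_choose (x : ℂ) (k : ℕ) : bc x k = Ring.choose x k := by
  have h := Ring.descPochhammer_eq_factorial_smul_choose x k
  have h2 : (descPochhammer ℤ k).smeval x = Pfn x k := by
    rw [← aeval_eq_smeval, aeval_def, ← eval_map, descPochhammer_map, Pfn_eq_desc]
  rw [h2] at h
  rw [bc, h, nsmul_eq_mul,
    mul_div_cancel_left₀ _ (Nat.cast_ne_zero.mpr (Nat.factorial_ne_zero k) : (k.factorial : ℂ) ≠ 0)]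

lemma bc_vandermonde (a b : ℂ) (N : ℕ) :
    ∑ t ∈ range (N + 1), bc a t * bc b (N - t) = bc (a + b) N := by
  simp_rw [bc_eq_choose]
  rw [Ring.add_choose_eq N (Commute.all a b),
    Finset.Nat.sum_antidiagonal_eq_sum_range_succ_mk]

lemma Pfn_shift (x : ℂ) (t : ℕ) : Pfn (x + t) t = ∏ i ∈ range t, (x + 1 + i) := by
  induction t with
  | zero => simp [Pfn]
  | succ t ih =>
      rw [Pfn, Finset.prod_range_succ', Finset.prod_range_succ]
      have h1 : ∀ i ∈ range t, (x + (t+1 : ℕ) - ((i+1 : ℕ) : ℂ)) = (x + t) - i := by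
        intro i _; push_cast; ring
      rw [Finset.prod_congr rfl h1, ← Pfn, ih]
      push_cast
      ring

lemma bc_neg_upper (x : ℂ) (t : ℕ) : bc (x + t) t = (-1) ^ t * bc (-x - 1) t := by
  have hP : Pfn (-x - 1) t = (-1) ^ t * Pfn (x + t) t := by
    rw [Pfn_shift, Pfn]
    have h1 : ∀ i ∈ range t, (-x - 1 - (i : ℂ)) = (-1) * (x + 1 + i) := by
      intro i _; ring
    rw [Finset.prod_congr rfl h1, Finset.prod_mul_distrib, Finset.prod_const, Finset.card_range]
  have hsq : ((-1 : ℂ)) ^ t * ((-1 : ℂ)) ^ t = 1 := by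
    rw [← pow_add, ← two_mul, pow_mul]; simp
  rw [bc, bc, hP, mul_div_assoc, ← mul_assoc, hsq, one_mul]

lemma scalar_key (Nn : ℕ) (α δ : ℂ) :
    ∑ t ∈ range (Nn + 1),
        (-1 : ℂ) ^ (Nn - t) * bc (δ - α + Nn) (Nn - t) * bc (δ + t) t = bc α Nn := by
  have h1 : ∀ t ∈ range (Nn + 1),
      (-1 : ℂ) ^ (Nn - t) * bc (δ - α + Nn) (Nn - t) * bc (δ + t) t
        = (-1) ^ Nn * (bc (-δ - 1) t * bc (δ - α + Nn) (Nn - t)) := by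
    intro t ht
    rw [bc_neg_upper δ t]
    have ht' : t ≤ Nn := by simpa using Nat.lt_succ_iff.mp (mem_range.mp ht)
    have hs : (-1 : ℂ) ^ (Nn - t) * (-1 : ℂ) ^ t = (-1) ^ Nn := by
      rw [← pow_add]; congr 1; omega
    calc (-1 : ℂ) ^ (Nn - t) * bc (δ - α + Nn) (Nn - t) * ((-1) ^ t * bc (-δ - 1) t)
        = ((-1 : ℂ) ^ (Nn - t) * (-1) ^ t) * (bc (-δ - 1) t * bc (δ - α + Nn) (Nn - t)) := by ring
      _ = _ := by rw [hs]
  rw [Finset.sum_congr rfl h1, ← Finset.mul_sum, bc_vandermonde]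
  have h2 : (-δ - 1) + (δ - α + Nn) = (-α - 1) + Nn := by ring
  rw [h2, bc_neg_upper (-α - 1) Nn]
  have h3 : (-(-α - 1) - 1) = α := by ring
  rw [h3, ← mul_assoc, ← pow_add]
  simp [pow_add, ← two_mul, pow_mul]

lemma scalar_key_P (Nn : ℕ) (α δ : ℂ) :
    ∑ t ∈ range (Nn + 1),
        (Nn.choose t : ℂ) *
          ((-1 : ℂ) ^ (Nn - t) * Pfn (δ - α + Nn) (Nn - t) * Pfn (δ + t) t)
      = Pfn α Nn := by
  have key := scalar_key Nn α δ
  have h : ∀ t ∈ range (Nn + 1),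
      (Nn.choose t : ℂ) *
          ((-1 : ℂ) ^ (Nn - t) * Pfn (δ - α + Nn) (Nn - t) * Pfn (δ + t) t)
        = (Nn.factorial : ℂ) *
            ((-1 : ℂ) ^ (Nn - t) * bc (δ - α + Nn) (Nn - t) * bc (δ + t) t) := by
    intro t ht
    have ht' : t ≤ Nn := Nat.lt_succ_iff.mp (mem_range.mp ht)
    have hfact : (Nn.factorial : ℂ) = (Nn.choose t : ℂ) * (t.factorial : ℂ) * ((Nn - t).factorial : ℂ) := by
      rw [← Nat.cast_mul, ← Nat.cast_mul, Nat.choose_mul_factorial_mul_factorial ht']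
    rw [bc, bc, hfact]
    have h1 : ((Nn - t).factorial : ℂ) ≠ 0 := Nat.cast_ne_zero.mpr (Nat.factorial_ne_zero _)
    have h2 : (t.factorial : ℂ) ≠ 0 := Nat.cast_ne_zero.mpr (Nat.factorial_ne_zero _)
    field_simp
  rw [Finset.sum_congr rfl h, ← Finset.mul_sum, key, bc,
    mul_div_cancel₀ _ (Nat.cast_ne_zero.mpr (Nat.factorial_ne_zero Nn) : (Nn.factorial : ℂ) ≠ 0)]


lemma Iic_pi_eq {m : ℕ} (N : Fin m → ℕ) :
    Finset.Iic N = Fintype.piFinset fun i => Finset.Iic (N i) := by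
  ext r
  simp [Fintype.mem_piFinset, Pi.le_def]

lemma expand_pow_prod {m : ℕ} (k : Fin m → ℕ) (x : Fin m → ℂ) :
    ∏ i, (1 + x i) ^ k i
      = ∑ j ∈ Finset.Iic k, ((∏ i, (k i).choose (j i) : ℕ) : ℂ) * ∏ i, x i ^ j i := by
  have h1 : ∀ i : Fin m, (1 + x i) ^ k i
      = ∑ t ∈ range (k i + 1), x i ^ t * ((k i).choose t : ℂ) := by
    intro i
    rw [add_comm (1 : ℂ) (x i), add_pow]
    simp
  simp_rw [h1]
  rw [Finset.prod_univ_sum]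
  have h2 : Fintype.piFinset (fun i => range (k i + 1))
      = Fintype.piFinset fun i => Finset.Iic (k i) := by
    congr 1; funext i; ext t; simp [Nat.lt_succ_iff]
  rw [h2, ← Iic_pi_eq]
  apply Finset.sum_congr rfl
  intro j _
  rw [Finset.prod_mul_distrib]
  push_cast
  ring

-- fiber lemma over ℕ via polynomial coefficients
lemma fiber_choose {m : ℕ} (N : Fin m → ℕ) (t : ℕ) :
    ∑ r ∈ (Finset.Iic N).filter (fun r => ∑ i, r i = t), ∏ i, (N i).choose (r i)
      = (∑ i, N i).choose t := by
  classical
  have hp : ∏ i, ((X : ℕ[X]) + 1) ^ N i = (X + 1) ^ (∑ i, N i) :=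
    Finset.prod_pow_eq_pow_sum univ N (X + 1)
  have h1 : ∀ i : Fin m, ((X : ℕ[X]) + 1) ^ N i
      = ∑ s ∈ range (N i + 1), (((N i).choose s : ℕ) : ℕ[X]) * X ^ s := by
    intro i
    rw [add_pow]
    apply Finset.sum_congr rfl
    intro s _
    rw [one_pow]
    ring
  have h2 : ∏ i, ((X : ℕ[X]) + 1) ^ N i
      = ∑ r ∈ Finset.Iic N, ((∏ i, (N i).choose (r i) : ℕ) : ℕ[X]) * X ^ (∑ i, r i) := by
    simp_rw [h1]
    rw [Finset.prod_univ_sum]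
    have h3 : Fintype.piFinset (fun i => range (N i + 1))
        = Fintype.piFinset fun i => Finset.Iic (N i) := by
      congr 1; funext i; ext s; simp [Nat.lt_succ_iff]
    rw [h3, ← Iic_pi_eq]
    apply Finset.sum_congr rfl
    intro r _
    rw [Finset.prod_mul_distrib, Nat.cast_prod, Finset.prod_pow_eq_pow_sum]
  have hco := congrArg (fun p => Polynomial.coeff p t) (h2.symm.trans hp)
  simp only [Polynomial.finset_sum_coeff, Polynomial.coeff_natCast_mul, Polynomial.coeff_X_pow,
    Polynomial.coeff_X_add_one_pow, Nat.cast_id, mul_ite, mul_one, mul_zero] at hco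
  rw [← hco, Finset.sum_filter]
  apply Finset.sum_congr rfl
  intro r _
  by_cases h : (∑ i, r i) = t
  · simp [h]
  · rw [if_neg h, if_neg (fun hc => h hc.symm)]

lemma groupA {m : ℕ} (N : Fin m → ℕ) (f : ℕ → ℂ) :
    ∑ r ∈ Finset.Iic N, ((∏ i, (N i).choose (r i) : ℕ) : ℂ) * f (∑ i, r i)
      = ∑ t ∈ Finset.range ((∑ i, N i) + 1), ((∑ i, N i).choose t : ℂ) * f t := by
  classical
  rw [← Finset.sum_fiberwise_of_maps_to (g := fun r => ∑ i, r i)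
      (t := Finset.range ((∑ i, N i) + 1))
      (fun r hr => by
        simp only [Finset.mem_range, Nat.lt_succ_iff]
        exact Finset.sum_le_sum fun i _ => (Finset.mem_Iic.mp hr) i)]
  apply Finset.sum_congr rfl
  intro t _
  have h : ∀ r ∈ (Finset.Iic N).filter (fun r => ∑ i, r i = t),
      ((∏ i, (N i).choose (r i) : ℕ) : ℂ) * f (∑ i, r i)
        = ((∏ i, (N i).choose (r i) : ℕ) : ℂ) * f t := by
    intro r hr
    rw [(Finset.mem_filter.mp hr).2]
  rw [Finset.sum_congr rfl h, ← Finset.sum_mul, ← Nat.cast_sum, fiber_choose]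


lemma multiBinom_eq {m : ℕ} (x : ℂ) (v : Fin m → ℕ) :
    multiBinom x v = Pfn x (∑ i, v i) / ((∏ i, Nat.factorial (v i) : ℕ) : ℂ) := rfl

lemma inner_key {m : ℕ} (n j : Fin m → ℕ) (hj : j ≤ n) (α β : ℂ) :
    ∑ r ∈ Finset.Iic (n - j),
        (-1 : ℂ) ^ ((∑ i, n i) - (∑ i, (j + r) i)) *
            multiBinom (β - α + ∑ i, (n i : ℂ)) (n - (j + r)) *
            multiBinom (β + ∑ i, ((j + r) i : ℂ)) (j + r) *
            ((∏ i, ((j + r) i).choose (j i) : ℕ) : ℂ)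
      = multiBinom α (n - j) * multiBinom (β + ∑ i, (j i : ℂ)) j := by
  classical
  set N : Fin m → ℕ := n - j with hN
  have hni : ∀ i, n i = N i + j i := by
    intro i
    have h := Pi.le_def.mp hj i
    simp only [hN, Pi.sub_apply]
    omega
  set Nn : ℕ := ∑ i, N i with hNn
  set J : ℕ := ∑ i, j i with hJ
  have hsum_n : ∑ i, n i = Nn + J := by
    rw [hNn, hJ, ← Finset.sum_add_distrib]
    exact Finset.sum_congr rfl fun i _ => hni i
  set δ : ℂ := β + (J : ℂ) with hδ
  set Fj : ℕ := ∏ i, Nat.factorial (j i) with hFj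
  set FN : ℕ := ∏ i, Nat.factorial (N i) with hFN
  have hterm : ∀ r ∈ Finset.Iic N,
      (-1 : ℂ) ^ ((∑ i, n i) - (∑ i, (j + r) i)) *
          multiBinom (β - α + ∑ i, (n i : ℂ)) (n - (j + r)) *
          multiBinom (β + ∑ i, ((j + r) i : ℂ)) (j + r) *
          ((∏ i, ((j + r) i).choose (j i) : ℕ) : ℂ)
        = (Pfn δ J / (Fj : ℂ)) * ((FN : ℂ))⁻¹ *
            (((∏ i, (N i).choose (r i) : ℕ) : ℂ) *
              ((-1 : ℂ) ^ (Nn - (∑ i, r i)) * Pfn (δ - α + Nn) (Nn - (∑ i, r i)) *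
                Pfn (δ + (∑ i, r i)) (∑ i, r i))) := by
    intro r hr
    have hr' : ∀ i, r i ≤ N i := Finset.mem_Iic.mp hr
    set sr : ℕ := ∑ i, r i with hsr
    have hsrN : sr ≤ Nn := Finset.sum_le_sum fun i _ => hr' i
    have e6 : ∑ i, (j + r) i = J + sr := by
      simp only [Pi.add_apply]
      rw [Finset.sum_add_distrib]
    have e1 : (∑ i, n i) - (∑ i, (j + r) i) = Nn - sr := by
      rw [e6, hsum_n]; omega
    have e2 : n - (j + r) = N - r := by
      funext i
      simp only [Pi.sub_apply, Pi.add_apply]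
      have := hni i; omega
    have e5 : ∑ i, (N - r) i = Nn - sr := by
      have : ∑ i, ((N - r) i + r i) = ∑ i, N i := by
        apply Finset.sum_congr rfl
        intro i _
        simp only [Pi.sub_apply]
        have := hr' i; omega
      rw [Finset.sum_add_distrib] at this
      omega
    have e3 : (β - α + ∑ i, (n i : ℂ)) = δ - α + (Nn : ℂ) := by
      rw [← Nat.cast_sum, hsum_n, hδ]; push_cast; ring
    have e4 : β + ∑ i, ((j + r) i : ℂ) = δ + (sr : ℂ) := by
      rw [← Nat.cast_sum, e6, hδ]; push_cast; ring
    rw [e1, e2, e3, e4]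
    rw [multiBinom_eq, multiBinom_eq, e5, e6]
    set Fr : ℕ := ∏ i, Nat.factorial (r i) with hFr
    set FNr : ℕ := ∏ i, Nat.factorial ((N - r) i) with hFNr
    set Fjr : ℕ := ∏ i, Nat.factorial ((j + r) i) with hFjr
    set Cjr : ℕ := ∏ i, ((j + r) i).choose (j i) with hCjr
    set CNr : ℕ := ∏ i, (N i).choose (r i) with hCNr
    -- Pochhammer split
    have f1 : Pfn (δ + (sr : ℂ)) (J + sr) = Pfn (δ + sr) sr * Pfn δ J := by
      rw [add_comm J sr, Pfn_add]
      congr 1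
      ring_nf
    -- factorial identities
    have c2 : (Cjr : ℂ) * (Fj : ℂ) * (Fr : ℂ) = (Fjr : ℂ) := by
      rw [hCjr, hFj, hFr, hFjr]
      push_cast [← Finset.prod_mul_distrib]
      apply Finset.prod_congr rfl
      intro i _
      have h := Nat.choose_mul_factorial_mul_factorial
        (show j i ≤ j i + r i by omega)
      have h2 : (j i + r i) - j i = r i := by omega
      rw [h2] at h
      simp only [Pi.add_apply]
      exact_mod_cast h
    have c3 : (CNr : ℂ) * (Fr : ℂ) * (FNr : ℂ) = (FN : ℂ) := by
      rw [hCNr, hFr, hFNr, hFN]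
      push_cast [← Finset.prod_mul_distrib]
      apply Finset.prod_congr rfl
      intro i _
      have h := Nat.choose_mul_factorial_mul_factorial (hr' i)
      simp only [Pi.sub_apply]
      exact_mod_cast h
    have hFj0 : (Fj : ℂ) ≠ 0 := by
      rw [hFj]; push_cast
      exact Finset.prod_ne_zero_iff.mpr fun i _ =>
        Nat.cast_ne_zero.mpr (Nat.factorial_ne_zero _)
    have hFN0 : (FN : ℂ) ≠ 0 := by
      rw [hFN]; push_cast
      exact Finset.prod_ne_zero_iff.mpr fun i _ =>
        Nat.cast_ne_zero.mpr (Nat.factorial_ne_zero _)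
    have hFr0 : (Fr : ℂ) ≠ 0 := by
      rw [hFr]; push_cast
      exact Finset.prod_ne_zero_iff.mpr fun i _ =>
        Nat.cast_ne_zero.mpr (Nat.factorial_ne_zero _)
    have hFNr0 : (FNr : ℂ) ≠ 0 := by
      rw [hFNr]; push_cast
      exact Finset.prod_ne_zero_iff.mpr fun i _ =>
        Nat.cast_ne_zero.mpr (Nat.factorial_ne_zero _)
    have hFjr0 : (Fjr : ℂ) ≠ 0 := by
      rw [hFjr]; push_cast
      exact Finset.prod_ne_zero_iff.mpr fun i _ =>
        Nat.cast_ne_zero.mpr (Nat.factorial_ne_zero _)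
    have haux : ((FNr : ℂ))⁻¹ * (((Fjr : ℂ))⁻¹ * (Cjr : ℂ))
        = ((Fj : ℂ))⁻¹ * (((FN : ℂ))⁻¹ * (CNr : ℂ)) := by
      field_simp
      linear_combination (-( (Cjr : ℂ) * (Fj : ℂ))) * c3 + ((CNr : ℂ) * (FNr : ℂ)) * c2
    rw [f1]
    linear_combination ((-1 : ℂ) ^ (Nn - sr) * Pfn (δ - α + (Nn : ℂ)) (Nn - sr) *
      Pfn (δ + (sr : ℂ)) sr * Pfn δ J) * haux
  rw [Finset.sum_congr rfl hterm, ← Finset.mul_sum,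
    groupA N (fun t => (-1 : ℂ) ^ (Nn - t) * Pfn (δ - α + Nn) (Nn - t) * Pfn (δ + t) t),
    scalar_key_P Nn α δ]
  rw [multiBinom_eq, multiBinom_eq]
  have : β + ∑ i, (j i : ℂ) = δ := by rw [hδ, ← Nat.cast_sum]
  rw [this]
  rw [show ∑ i, (n - j) i = Nn by rw [hNn]]
  rw [show (∏ i, Nat.factorial ((n - j) i) : ℕ) = FN from rfl]
  rw [show (∏ i, Nat.factorial (j i) : ℕ) = Fj from rfl]
  rw [show ∑ i, j i = J from rfl]
  field_simp

/-- The multinomial Munarini identity. -/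
theorem multinomial_munarini (m : ℕ) (hm : 0 < m) (n : Fin m → ℕ) (α β : ℂ)
    (x : Fin m → ℂ) :
    ∑ k ∈ Finset.Iic n,
        (-1 : ℂ) ^ ((∑ j, n j) - ∑ j, k j) *
          multiBinom (β - α + ∑ j, (n j : ℂ)) (n - k) *
          multiBinom (β + ∑ j, (k j : ℂ)) k * ∏ j, (1 + x j) ^ k j =
      ∑ k ∈ Finset.Iic n,
        multiBinom α (n - k) * multiBinom (β + ∑ j, (k j : ℂ)) k * ∏ j, x j ^ k j := by
  classical
  -- expand the powers of (1 + x)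
  have step1 : ∀ k ∈ Finset.Iic n,
      (-1 : ℂ) ^ ((∑ j, n j) - ∑ j, k j) *
          multiBinom (β - α + ∑ j, (n j : ℂ)) (n - k) *
          multiBinom (β + ∑ j, (k j : ℂ)) k * ∏ j, (1 + x j) ^ k j
        = ∑ jv ∈ Finset.Iic k,
            ((-1 : ℂ) ^ ((∑ j, n j) - ∑ j, k j) *
              multiBinom (β - α + ∑ j, (n j : ℂ)) (n - k) *
              multiBinom (β + ∑ j, (k j : ℂ)) k *
              ((∏ i, (k i).choose (jv i) : ℕ) : ℂ)) * ∏ i, x i ^ jv i := by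
    intro k _
    rw [expand_pow_prod k x, Finset.mul_sum]
    apply Finset.sum_congr rfl
    intro jv _
    ring
  rw [Finset.sum_congr rfl step1]
  -- swap the order of summation
  rw [Finset.sum_comm' (s' := fun jv => Finset.Icc jv n) (t' := Finset.Iic n)
    (by
      intro k jv
      simp only [Finset.mem_Iic, Finset.mem_Icc]
      constructor
      · rintro ⟨h1, h2⟩; exact ⟨⟨h2, h1⟩, le_trans h2 h1⟩
      · rintro ⟨⟨h1, h2⟩, _⟩; exact ⟨h2, h1⟩)]
  apply Finset.sum_congr rfl
  intro jv hjv
  have hjn : jv ≤ n := Finset.mem_Iic.mp hjv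
  -- reindex k = jv + r
  have step2 : ∑ k ∈ Finset.Icc jv n,
      ((-1 : ℂ) ^ ((∑ j, n j) - ∑ j, k j) *
        multiBinom (β - α + ∑ j, (n j : ℂ)) (n - k) *
        multiBinom (β + ∑ j, (k j : ℂ)) k *
        ((∏ i, (k i).choose (jv i) : ℕ) : ℂ)) * ∏ i, x i ^ jv i
      = ∑ r ∈ Finset.Iic (n - jv),
          ((-1 : ℂ) ^ ((∑ i, n i) - (∑ i, (jv + r) i)) *
            multiBinom (β - α + ∑ i, (n i : ℂ)) (n - (jv + r)) *
            multiBinom (β + ∑ i, ((jv + r) i : ℂ)) (jv + r) *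
            ((∏ i, ((jv + r) i).choose (jv i) : ℕ) : ℂ)) * ∏ i, x i ^ jv i := by
    apply Finset.sum_nbij' (i := fun k => k - jv) (j := fun r => jv + r)
    · intro k hk
      have h := Finset.mem_Icc.mp hk
      rw [Finset.mem_Iic]
      intro i
      simp only [Pi.sub_apply]
      exact Nat.sub_le_sub_right (Pi.le_def.mp h.2 i) (jv i)
    · intro r hr
      rw [Finset.mem_Icc]
      constructor
      · intro i; simp only [Pi.add_apply]; omega
      · intro i
        have h1 := Pi.le_def.mp (Finset.mem_Iic.mp hr) i
        have h2 := Pi.le_def.mp hjn i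
        simp only [Pi.add_apply]
        simp only [Pi.sub_apply] at h1
        omega
    · intro k hk
      have h := Pi.le_def.mp (Finset.mem_Icc.mp hk).1
      funext i
      simp only [Pi.add_apply, Pi.sub_apply]
      have := h i; omega
    · intro r hr
      funext i
      simp only [Pi.add_apply, Pi.sub_apply]
      omega
    · intro k hk
      have h := Pi.le_def.mp (Finset.mem_Icc.mp hk).1
      have hke : jv + (k - jv) = k := by
        funext i
        simp only [Pi.add_apply, Pi.sub_apply]
        have := h i; omega
      rw [hke]
  rw [step2, ← Finset.sum_mul, inner_key n jv hjn α β]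
end

section
/- (Multinomial Simons identity) Let m be a positive integer, n ∈ ℕ^m, and x ∈ ℂ^m. Then the sum, over all k ∈ ℕ^m with k_i ≤ n_i for each i, of (−1)^{|n|−|k|}·C(|n|, n−k)·C(|n|+|k|, k)·(1+x)^k, equals the sum over the same range of k of C(|n|, n−k)·C(|n|+|k|, k)·x^k, where |k| = k_1 + ⋯ + k_m, x^k = x_1^{k_1}⋯x_m^{k_m}, and (1+x)^k = (1+x_1)^{k_1}⋯(1+x_m)^{k_m}. -/
/-!
For `k ≤ n` the coefficient factors as
`C(|n|, n - k) C(|n| + |k|, k) = multinomial n * C(|n| + |k|, |n|) * ∏ⱼ C(nⱼ, kⱼ)`,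
so it suffices to prove the identity with the weights `C(|n| + |k|, |n|) ∏ⱼ C(nⱼ, kⱼ)`.
Read `C(|n| + |k|, |n|)` as the coefficient of `X^|n|` in `(X + 1)^|n| * (X + 1)^|k|`, or
equally in `(X + 1)^|n| * (X + 1)^|k| * X^(|n| - |k|)`. The binomial theorem in each coordinate
then turns the left side into that coefficient of `(X + 1)^|n| ∏ⱼ ((1 + xⱼ)(X + 1) - 1)^nⱼ`, and
the right side into that coefficient of `(X + 1)^|n| ∏ⱼ (xⱼ (X + 1) + X)^nⱼ`: the same polynomial.
-/

open Finset Polynomial Nat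

variable {ι R : Type*}

theorem prod_mul_add_pow_eq_sum_Iic [Fintype ι] [DecidableEq ι] [CommSemiring R]
    (n : ι → ℕ) (a : ι → R) (y g : R) :
    ∏ j, (a j * y + g) ^ n j =
      ∑ k ∈ Iic n, (∏ j, (n j).choose (k j) * a j ^ k j) *
        (y ^ (∑ j, k j) * g ^ (∑ j, n j - ∑ j, k j)) := calc
  ∏ j, (a j * y + g) ^ n j
      = ∏ j, ∑ i ∈ Iic (n j), (a j * y) ^ i * g ^ (n j - i) * (n j).choose i := by
    simp only [add_pow, range_succ_eq_Iic]
  _ = ∑ k ∈ Iic n, ∏ j, (a j * y) ^ k j * g ^ (n j - k j) * (n j).choose (k j) :=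
    prod_univ_sum _ _
  _ = _ := sum_congr rfl fun k hk => by
    rw [← sum_tsub_distrib _ fun j _ => mem_Iic.1 hk j]
    simp only [mul_pow, prod_mul_distrib, prod_pow_eq_pow_sum]
    ring

theorem coeff_X_add_one_pow_mul_X_add_one_pow [Semiring R] (N s : ℕ) :
    ((X + 1) ^ N * (X + 1) ^ s : R[X]).coeff N = (N + s).choose N := by
  rw [← pow_add, coeff_X_add_one_pow]

theorem coeff_X_add_one_pow_mul_X_add_one_pow_mul_X_pow [Semiring R] {N s : ℕ} (h : s ≤ N) :
    ((X + 1) ^ N * ((X + 1) ^ s * X ^ (N - s)) : R[X]).coeff N = (N + s).choose N := by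
  rw [← mul_assoc, ← pow_add, ← X_pow_mul, coeff_X_pow_mul', if_pos (Nat.sub_le _ _),
    coeff_X_add_one_pow, Nat.sub_sub_self h, Nat.choose_symm_add]

theorem prod_choose_mul_C_pow [CommSemiring R] (s : Finset ι) (n k : ι → ℕ) (a : ι → R) :
    ∏ j ∈ s, ((n j).choose (k j) : R[X]) * C (a j) ^ k j =
      C (∏ j ∈ s, (n j).choose (k j) * a j ^ k j) := by
  simp

theorem sum_Iic_neg_one_pow_mul_choose_mul_prod_one_add_pow [Fintype ι] [DecidableEq ι]
    [CommRing R] (n : ι → ℕ) (x : ι → R) :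
    ∑ k ∈ Iic n, (-1) ^ (∑ j, n j - ∑ j, k j) * ((∑ j, n j + ∑ j, k j).choose (∑ j, n j) : R) *
        ∏ j, (n j).choose (k j) * (1 + x j) ^ k j =
      ∑ k ∈ Iic n, ((∑ j, n j + ∑ j, k j).choose (∑ j, n j) : R) *
        ∏ j, (n j).choose (k j) * x j ^ k j := by
  have hP : ∏ j, (C (1 + x j) * (X + 1) + C (-1)) ^ n j = ∏ j, (C (x j) * (X + 1) + X) ^ n j :=
    prod_congr rfl fun j _ => by
      simp only [map_add, map_one, map_neg]
      ring
  calc _ = ((X + 1) ^ (∑ j, n j) *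
        ∏ j, (C (1 + x j) * (X + 1) + C (-1)) ^ n j).coeff (∑ j, n j) := by
        rw [prod_mul_add_pow_eq_sum_Iic, mul_sum, finsetSum_coeff]
        refine sum_congr rfl fun k _ => ?_
        rw [prod_choose_mul_C_pow, ← map_pow, mul_left_comm, coeff_C_mul, ← mul_assoc,
          coeff_mul_C, coeff_X_add_one_pow_mul_X_add_one_pow]
        ring
    _ = _ := by
        rw [hP, prod_mul_add_pow_eq_sum_Iic, mul_sum, finsetSum_coeff]
        refine sum_congr rfl fun k hk => ?_
        rw [prod_choose_mul_C_pow, mul_left_comm, coeff_C_mul,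
          coeff_X_add_one_pow_mul_X_add_one_pow_mul_X_pow
            (sum_le_sum fun j _ => mem_Iic.1 hk j)]
        ring

theorem multiBinom_natCast_mul_prod_factorial {m : ℕ} (x : ℕ) (v : Fin m → ℕ) :
    multiBinom (x : ℂ) v * ∏ j, ((v j)! : ℂ) = x.descFactorial (∑ j, v j) := by
  rw [multiBinom, prod_range_natCast_sub, ← descFactorial_eq_prod_range, ← Nat.cast_prod,
    div_mul_cancel₀ _ (Nat.cast_ne_zero.2 (by positivity))]

theorem descFactorial_sub_mul_descFactorial_add_mul_factorial {N K : ℕ} (h : K ≤ N) :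
    N.descFactorial (N - K) * (N + K).descFactorial K * K ! = (N + K)! := calc
  _ = (N - (N - K))! * N.descFactorial (N - K) * (N + K).descFactorial K := by
    rw [Nat.sub_sub_self h]; ring
  _ = (N + K - K)! * (N + K).descFactorial K := by
    rw [factorial_mul_descFactorial (N.sub_le K), Nat.add_sub_cancel]
  _ = (N + K)! := factorial_mul_descFactorial le_add_self

theorem multiBinom_mul_multiBinom {m : ℕ} {n k : Fin m → ℕ} (hk : k ≤ n) :
    multiBinom ((∑ j, n j : ℕ) : ℂ) (n - k) * multiBinom ((∑ j, n j + ∑ j, k j : ℕ) : ℂ) k =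
      multinomial univ n * ((∑ j, n j + ∑ j, k j).choose (∑ j, n j) : ℂ) *
        ∏ j, ((n j).choose (k j) : ℂ) := by
  set N := ∑ j, n j
  set K := ∑ j, k j with hK
  have hKN : K ≤ N := sum_le_sum fun j _ => hk j
  have hsub : ∑ j, (n - k) j = N - K := sum_tsub_distrib _ fun j _ => hk j
  have hD : ((K ! * (∏ j, ((n - k) j)!) * ∏ j, (k j)! : ℕ) : ℂ) ≠ 0 :=
    Nat.cast_ne_zero.2 (by positivity)
  -- multiplied by `K! ∏ (nⱼ - kⱼ)! ∏ kⱼ!`, both sides become `(N + K)!`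
  refine mul_right_cancel₀ hD ?_
  have hR : multinomial univ n * (N + K).choose N * (∏ j, (n j).choose (k j)) *
      (K ! * (∏ j, ((n - k) j)!) * ∏ j, (k j)!) = (N + K)! := by
    have hprod : ∏ j, (n j).choose (k j) * (k j)! * ((n - k) j)! = ∏ j, (n j)! :=
      prod_congr rfl fun j _ => choose_mul_factorial_mul_factorial (hk j)
    simp only [prod_mul_distrib] at hprod
    calc _ = (N + K).choose N * ((∏ j, (n j)!) * multinomial univ n) * K ! := by
          rw [← hprod]; ring
      _ = (N + K).choose N * N ! * (N + K - N)! := by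
          rw [multinomial_spec, Nat.add_sub_cancel_left]
      _ = (N + K)! := choose_mul_factorial_mul_factorial le_self_add
  calc _ = (multiBinom (N : ℂ) (n - k) * ∏ j, (((n - k) j)! : ℂ)) *
        (multiBinom ((N + K : ℕ) : ℂ) k * ∏ j, ((k j)! : ℂ)) * (K ! : ℂ) := by
        simp only [Nat.cast_mul, Nat.cast_prod]
        ring
    _ = _ := by
      rw [multiBinom_natCast_mul_prod_factorial, multiBinom_natCast_mul_prod_factorial, hsub, ← hK]
      norm_cast
      exact (descFactorial_sub_mul_descFactorial_add_mul_factorial hKN).trans hR.symm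

theorem multinomial_simons_general (m : ℕ) (n : Fin m → ℕ) (x : Fin m → ℂ) :
    ∑ k ∈ Finset.Iic n,
        (-1 : ℂ) ^ ((∑ j, n j) - ∑ j, k j) *
          multiBinom ((∑ j, n j : ℕ) : ℂ) (n - k) *
          multiBinom (((∑ j, n j) + ∑ j, k j : ℕ) : ℂ) k * ∏ j, (1 + x j) ^ k j =
      ∑ k ∈ Finset.Iic n,
        multiBinom ((∑ j, n j : ℕ) : ℂ) (n - k) *
          multiBinom (((∑ j, n j) + ∑ j, k j : ℕ) : ℂ) k * ∏ j, x j ^ k j := by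
  calc _ = multinomial univ n * ∑ k ∈ Iic n, (-1) ^ (∑ j, n j - ∑ j, k j) *
          ((∑ j, n j + ∑ j, k j).choose (∑ j, n j) : ℂ) *
          ∏ j, (n j).choose (k j) * (1 + x j) ^ k j := by
        rw [mul_sum]
        refine sum_congr rfl fun k hk => ?_
        rw [mul_assoc ((-1 : ℂ) ^ _), multiBinom_mul_multiBinom (mem_Iic.1 hk), prod_mul_distrib]
        ring
    _ = multinomial univ n * ∑ k ∈ Iic n,
          ((∑ j, n j + ∑ j, k j).choose (∑ j, n j) : ℂ) * ∏ j, (n j).choose (k j) * x j ^ k j := by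
        rw [sum_Iic_neg_one_pow_mul_choose_mul_prod_one_add_pow]
    _ = _ := by
        rw [mul_sum]
        refine sum_congr rfl fun k hk => ?_
        rw [multiBinom_mul_multiBinom (mem_Iic.1 hk), prod_mul_distrib]
        ring

/-- The multinomial Simons identity. -/
theorem multinomial_simons (m : ℕ) (hm : 0 < m) (n : Fin m → ℕ) (x : Fin m → ℂ) :
    ∑ k ∈ Finset.Iic n,
        (-1 : ℂ) ^ ((∑ j, n j) - ∑ j, k j) *
          multiBinom ((∑ j, n j : ℕ) : ℂ) (n - k) *
          multiBinom (((∑ j, n j) + ∑ j, k j : ℕ) : ℂ) k * ∏ j, (1 + x j) ^ k j =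
      ∑ k ∈ Finset.Iic n,
        multiBinom ((∑ j, n j : ℕ) : ℂ) (n - k) *
          multiBinom (((∑ j, n j) + ∑ j, k j : ℕ) : ℂ) k * ∏ j, x j ^ k j :=
  multinomial_simons_general m n x
end

section
/- (Hou–Zeng q-analogue of Sun's identity) Let m, n, a be natural numbers with a ≤ m and a ≤ n, and let q and x be complex numbers with q not a root of unity and q ≠ 0 (or work in the field of rational functions ℚ(q,x)). Then the sum over k from 0 to m of (−1)^{m−k}·qbinom(m,k)·qbinom(n+k,a)·(−x q^a; q)_{n+k−a}·q^{C(k+1,2)−mk+C(a,2)} equals the sum over k from 0 to n of qbinom(n,k)·qbinom(m+k,a)·x^{m+k−a}·q^{mn+C(k,2)}, where qbinom denotes the Gaussian binomial coefficient, (b;q)_r = (1−b)(1−bq)⋯(1−bq^{r−1}) is the q-Pochhammer symbol, and C(p,2) = p(p−1)/2. -/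
/-- The q-Pochhammer symbol `(b; q)_r = (1-b)(1-bq)⋯(1-bq^{r-1})`. -/
noncomputable def qPoch (q b : ℂ) (r : ℕ) : ℂ := ∏ i ∈ Finset.range r, (1 - b * q ^ i)

/-- The Gaussian binomial coefficient `qbinom(p, r) = (q^{p-r+1}; q)_r / (q; q)_r`,
equal to `0` when `r > p`. -/
noncomputable def qBinom (q : ℂ) (p r : ℕ) : ℂ :=
  if r ≤ p then qPoch q (q ^ (p - r + 1)) r / qPoch q q r else 0

/-!
Expanding `(-x q^a; q)_{n+k-a}` by Gauss's q-binomial theorem and absorbing `qbinom(n+k, a)` by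
trinomial revision turns the left side into a double sum over `k` and `j` whose inner sum is
`∑_k (-1)^{m-k} qbinom(m,k) q^{C(k+1,2) - mk} qbinom(n+k, a+j)`. This is a q-analogue of an
`m`-th forward difference of `p ↦ qbinom(p, s)`, and the q-Pascal rules give it in closed form by
induction on `m`: it is `q^{m(n-s) + C(m+1,2)} qbinom(n, s-m)` for `s ≥ m` and `0` otherwise.
Only the terms with `a + j ≥ m` survive, and `j = m - a + k` turns them into the right side.
-/

open Finset

@[simp]
lemma qPoch_zero (q b : ℂ) : qPoch q b 0 = 1 := prod_range_zero _

lemma qPoch_succ (q b : ℂ) (r : ℕ) : qPoch q b (r + 1) = qPoch q b r * (1 - b * q ^ r) :=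
  prod_range_succ _ _

lemma qPoch_add (q b : ℂ) (r s : ℕ) :
    qPoch q b (r + s) = qPoch q b r * qPoch q (b * q ^ r) s := by
  simp only [qPoch, prod_range_add, pow_add, mul_assoc]

lemma qPoch_self_ne_zero {q : ℂ} (hq : ∀ k : ℕ, 0 < k → q ^ k ≠ 1) (r : ℕ) :
    qPoch q q r ≠ 0 :=
  prod_ne_zero_iff.2 fun i _ ↦ by
    rw [← pow_succ', sub_ne_zero]
    exact (hq (i + 1) i.succ_pos).symm

lemma qBinom_eq_div {q : ℂ} (hq : ∀ k : ℕ, 0 < k → q ^ k ≠ 1) {p r : ℕ} (h : r ≤ p) :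
    qBinom q p r = qPoch q q p / (qPoch q q r * qPoch q q (p - r)) := by
  obtain ⟨d, rfl⟩ := Nat.exists_eq_add_of_le' h
  have hr := qPoch_self_ne_zero hq r
  have hd := qPoch_self_ne_zero hq d
  rw [qBinom, if_pos h, Nat.add_sub_cancel, qPoch_add, ← pow_succ']
  field_simp

@[simp]
lemma qBinom_zero_right (q : ℂ) (p : ℕ) : qBinom q p 0 = 1 := by
  simp [qBinom]

lemma qBinom_of_lt (q : ℂ) {p r : ℕ} (h : p < r) : qBinom q p r = 0 :=
  if_neg h.not_ge

lemma qBinom_self {q : ℂ} (hq : ∀ k : ℕ, 0 < k → q ^ k ≠ 1) (p : ℕ) : qBinom q p p = 1 := by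
  rw [qBinom_eq_div hq le_rfl, Nat.sub_self, qPoch_zero, mul_one,
    div_self (qPoch_self_ne_zero hq p)]

lemma qBinom_succ_succ {q : ℂ} (hq : ∀ k : ℕ, 0 < k → q ^ k ≠ 1) (p r : ℕ) :
    qBinom q (p + 1) (r + 1) = q ^ (r + 1) * qBinom q p (r + 1) + qBinom q p r := by
  rcases lt_trichotomy r p with h | rfl | h
  · obtain ⟨d, rfl⟩ := Nat.exists_eq_add_of_lt h
    rw [qBinom_eq_div hq (by omega), qBinom_eq_div hq (by omega), qBinom_eq_div hq (by omega),
      show r + d + 1 + 1 - (r + 1) = d + 1 by omega, show r + d + 1 - (r + 1) = d by omega,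
      show r + d + 1 - r = d + 1 by omega]
    have h₁ := qPoch_self_ne_zero hq r
    have h₂ := qPoch_self_ne_zero hq d
    have h₃ := qPoch_self_ne_zero hq (r + 1)
    have h₄ := qPoch_self_ne_zero hq (d + 1)
    field_simp
    rw [qPoch_succ q q (r + d + 1), qPoch_succ q q r, qPoch_succ q q d]
    ring
  · simp [qBinom_self hq, qBinom_of_lt q (Nat.lt_succ_self r)]
  · simp [qBinom_of_lt q h, qBinom_of_lt q (Nat.lt_succ_of_lt h),
      qBinom_of_lt q (Nat.succ_lt_succ h)]

lemma qBinom_succ_succ' {q : ℂ} (hq : ∀ k : ℕ, 0 < k → q ^ k ≠ 1) (p r : ℕ) :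
    qBinom q (p + 1) (r + 1) = qBinom q p (r + 1) + q ^ (p - r) * qBinom q p r := by
  rcases lt_trichotomy r p with h | rfl | h
  · obtain ⟨d, rfl⟩ := Nat.exists_eq_add_of_lt h
    rw [qBinom_eq_div hq (by omega), qBinom_eq_div hq (by omega), qBinom_eq_div hq (by omega),
      show r + d + 1 + 1 - (r + 1) = d + 1 by omega, show r + d + 1 - (r + 1) = d by omega,
      show r + d + 1 - r = d + 1 by omega]
    have h₁ := qPoch_self_ne_zero hq r
    have h₂ := qPoch_self_ne_zero hq d
    have h₃ := qPoch_self_ne_zero hq (r + 1)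
    have h₄ := qPoch_self_ne_zero hq (d + 1)
    field_simp
    rw [qPoch_succ q q (r + d + 1), qPoch_succ q q r, qPoch_succ q q d]
    ring
  · simp [qBinom_self hq, qBinom_of_lt q (Nat.lt_succ_self r)]
  · simp [qBinom_of_lt q h, qBinom_of_lt q (Nat.lt_succ_of_lt h),
      qBinom_of_lt q (Nat.succ_lt_succ h)]

theorem qPoch_eq_sum {q : ℂ} (hq : ∀ k : ℕ, 0 < k → q ^ k ≠ 1) (b : ℂ) (N : ℕ) :
    qPoch q b N = ∑ j ∈ range (N + 1), qBinom q N j * q ^ j.choose 2 * (-b) ^ j := by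
  induction N with
  | zero => simp
  | succ N ih =>
    have hterm : ∀ j ∈ range (N + 1),
        qBinom q (N + 1) (j + 1) * q ^ (j + 1).choose 2 * (-b) ^ (j + 1) =
          qBinom q N (j + 1) * q ^ (j + 1).choose 2 * (-b) ^ (j + 1) +
            -b * q ^ N * (qBinom q N j * q ^ j.choose 2 * (-b) ^ j) := by
      intro j hj
      rw [qBinom_succ_succ' hq, Nat.choose_succ_succ', Nat.choose_one_right,
        ← pow_sub_mul_pow q (mem_range_succ_iff.1 hj)]
      ring
    have hshift : ∑ j ∈ range (N + 1), qBinom q N (j + 1) * q ^ (j + 1).choose 2 * (-b) ^ (j + 1)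
        + 1 = qPoch q b N := by
      rw [ih, sum_range_succ _ N, sum_range_succ' _ N, qBinom_of_lt q N.lt_succ_self]
      simp
    rw [sum_range_succ', sum_congr rfl hterm, sum_add_distrib, ← mul_sum, ← ih, qPoch_succ,
      qBinom_zero_right, Nat.choose_zero_succ]
    linear_combination -hshift

lemma qBinom_mul_qBinom_sub {q : ℂ} (hq : ∀ k : ℕ, 0 < k → q ^ k ≠ 1) (N a j : ℕ) :
    qBinom q N a * qBinom q (N - a) j = qBinom q (a + j) a * qBinom q N (a + j) := by
  by_cases h : a + j ≤ N
  · rw [qBinom_eq_div hq (by omega), qBinom_eq_div hq (by omega), qBinom_eq_div hq (by omega),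
      qBinom_eq_div hq h, Nat.sub_sub, Nat.add_sub_cancel_left]
    have h₁ := qPoch_self_ne_zero hq a
    have h₂ := qPoch_self_ne_zero hq j
    have h₃ := qPoch_self_ne_zero hq (N - a)
    have h₄ := qPoch_self_ne_zero hq (N - (a + j))
    have h₅ := qPoch_self_ne_zero hq (a + j)
    field_simp
  · rw [qBinom_of_lt q (not_le.1 h), mul_zero]
    rcases le_or_gt a N with ha | ha
    · rw [qBinom_of_lt q (by omega : N - a < j), mul_zero]
    · rw [qBinom_of_lt q ha, zero_mul]

lemma qBinom_mul_qPoch_eq_sum {q : ℂ} (hq : ∀ k : ℕ, 0 < k → q ^ k ≠ 1) (b : ℂ) {N a M : ℕ}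
    (hM : N - a < M) :
    qBinom q N a * qPoch q b (N - a) =
      ∑ j ∈ range M, qBinom q (a + j) a * qBinom q N (a + j) * q ^ j.choose 2 * (-b) ^ j := by
  rw [qPoch_eq_sum hq, mul_sum]
  refine (sum_subset (range_subset_range.2 hM) fun j _ hj ↦ ?_).trans
    (sum_congr rfl fun j _ ↦ ?_)
  · rw [qBinom_of_lt q (show N - a < j by simpa using hj)]
    ring
  · rw [← qBinom_mul_qBinom_sub hq]
    ring

/-- `∑ k ∈ range (m + 1), qDiffCoeff q m k * f (n + k)` is a q-analogue of the `m`-th forward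
difference of `f` at `n`. -/
noncomputable def qDiffCoeff (q : ℂ) (m k : ℕ) : ℂ :=
  (-1) ^ (m - k) * qBinom q m k * q ^ (((k + 1).choose 2 : ℤ) - m * k)

lemma qDiffCoeff_succ_zero (q : ℂ) (m : ℕ) : qDiffCoeff q (m + 1) 0 = -qDiffCoeff q m 0 := by
  simp [qDiffCoeff, pow_succ]

lemma qDiffCoeff_of_lt (q : ℂ) {m k : ℕ} (h : m < k) : qDiffCoeff q m k = 0 := by
  simp [qDiffCoeff, qBinom_of_lt q h]

lemma qDiffCoeff_succ_succ {q : ℂ} (hq0 : q ≠ 0) (hq : ∀ k : ℕ, 0 < k → q ^ k ≠ 1) (m k : ℕ) :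
    qDiffCoeff q (m + 1) (k + 1) = q ^ (-m : ℤ) * qDiffCoeff q m k - qDiffCoeff q m (k + 1) := by
  have hsign : (-1 : ℂ) ^ (m - k) * qBinom q m (k + 1) =
      -((-1) ^ (m - (k + 1)) * qBinom q m (k + 1)) := by
    rcases lt_or_ge k m with h | h
    · rw [show m - k = m - (k + 1) + 1 by omega, pow_succ]
      ring
    · simp [qBinom_of_lt q (Nat.lt_succ_of_le h)]
  have hexp₁ : q ^ (k + 1) * q ^ (((k + 1 + 1).choose 2 : ℤ) - (m + 1 : ℕ) * (k + 1 : ℕ)) =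
      q ^ (((k + 1 + 1).choose 2 : ℤ) - m * (k + 1 : ℕ)) := by
    rw [← zpow_natCast, ← zpow_add₀ hq0]
    push_cast
    ring_nf
  have hexp₂ : q ^ (((k + 1 + 1).choose 2 : ℤ) - (m + 1 : ℕ) * (k + 1 : ℕ)) =
      q ^ (-m : ℤ) * q ^ (((k + 1).choose 2 : ℤ) - m * k) := by
    rw [← zpow_add₀ hq0, Nat.choose_succ_succ' (k + 1), Nat.choose_one_right]
    push_cast
    ring_nf
  unfold qDiffCoeff
  rw [qBinom_succ_succ hq, Nat.add_sub_add_right]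
  linear_combination ((-1 : ℂ) ^ (m - k) * qBinom q m (k + 1)) * hexp₁ +
    ((-1 : ℂ) ^ (m - k) * qBinom q m k) * hexp₂ +
    q ^ (((k + 1 + 1).choose 2 : ℤ) - m * (k + 1 : ℕ)) * hsign

lemma sum_qDiffCoeff_succ {q : ℂ} (hq0 : q ≠ 0) (hq : ∀ k : ℕ, 0 < k → q ^ k ≠ 1) (m : ℕ)
    (f : ℕ → ℂ) :
    ∑ k ∈ range (m + 2), qDiffCoeff q (m + 1) k * f k =
      q ^ (-m : ℤ) * ∑ k ∈ range (m + 1), qDiffCoeff q m k * f (k + 1) -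
        ∑ k ∈ range (m + 1), qDiffCoeff q m k * f k := by
  have hshift : ∑ k ∈ range (m + 1), qDiffCoeff q m (k + 1) * f (k + 1) + qDiffCoeff q m 0 * f 0 =
      ∑ k ∈ range (m + 1), qDiffCoeff q m k * f k := by
    rw [← sum_range_succ' (fun k ↦ qDiffCoeff q m k * f k), sum_range_succ,
      qDiffCoeff_of_lt q m.lt_succ_self, zero_mul, add_zero]
  simp only [sum_range_succ' _ (m + 1), qDiffCoeff_succ_succ hq0 hq, qDiffCoeff_succ_zero, sub_mul,
    sum_sub_distrib, mul_sum, mul_assoc]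
  linear_combination -hshift

theorem sum_qDiffCoeff_mul_qBinom {q : ℂ} (hq0 : q ≠ 0) (hq : ∀ k : ℕ, 0 < k → q ^ k ≠ 1)
    (m n s : ℕ) :
    ∑ k ∈ range (m + 1), qDiffCoeff q m k * qBinom q (n + k) s =
      if m ≤ s then q ^ ((m : ℤ) * (n - s) + (m + 1).choose 2) * qBinom q n (s - m) else 0 := by
  induction m generalizing n with
  | zero => simp [qDiffCoeff]
  | succ m ih =>
    have hexp : q ^ (-m : ℤ) * q ^ ((m : ℤ) * ((n + 1 : ℕ) - s) + (m + 1).choose 2) =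
        q ^ ((m : ℤ) * (n - s) + (m + 1).choose 2) := by
      rw [← zpow_add₀ hq0]
      push_cast
      ring_nf
    rw [sum_qDiffCoeff_succ hq0 hq]
    simp only [← add_assoc, add_right_comm n _ 1]
    rw [ih, ih]
    rcases lt_trichotomy m s with h | rfl | h
    · obtain ⟨u, rfl⟩ := Nat.exists_eq_add_of_lt h
      rw [if_pos h.le, if_pos h.le, if_pos (Nat.succ_le_of_lt h),
        show m + u + 1 - m = u + 1 by omega, show m + u + 1 - (m + 1) = u by omega,
        ← mul_assoc, hexp, qBinom_succ_succ' hq]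
      rcases le_or_gt u n with hu | hu
      · have hexp' : q ^ ((m : ℤ) * (n - (m + u + 1 : ℕ)) + (m + 1).choose 2) * q ^ (n - u) =
            q ^ (((m + 1 : ℕ) : ℤ) * (n - (m + u + 1 : ℕ)) + (m + 1 + 1).choose 2) := by
          rw [← zpow_natCast, ← zpow_add₀ hq0, Nat.choose_succ_succ' (m + 1), Nat.choose_one_right]
          push_cast [hu]
          ring_nf
        linear_combination qBinom q n u * hexp'
      · simp [qBinom_of_lt q hu, qBinom_of_lt q (hu.trans u.lt_succ_self)]
    · simp only [le_refl, if_true, Nat.sub_self, qBinom_zero_right, mul_one, ← hexp]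
      simp
    · simp [h.not_ge, (Nat.lt_succ_of_lt h).not_ge]

theorem hou_zeng_q_sun_general (m n a : ℕ) (ham : a ≤ m) (q x : ℂ)
    (hq0 : q ≠ 0) (hq : ∀ k : ℕ, 0 < k → q ^ k ≠ 1) :
    ∑ k ∈ Finset.range (m + 1),
        (-1 : ℂ) ^ (m - k) * qBinom q m k * qBinom q (n + k) a *
          qPoch q (-x * q ^ a) (n + k - a) *
          q ^ (((k + 1).choose 2 : ℤ) - (m : ℤ) * k + (a.choose 2 : ℤ)) =
      ∑ k ∈ Finset.range (n + 1),
        qBinom q n k * qBinom q (m + k) a * x ^ (m + k - a) *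
          q ^ (m * n + k.choose 2) := by
  set g : ℕ → ℂ := fun j ↦
    q ^ (a.choose 2 : ℤ) * qBinom q (a + j) a * q ^ j.choose 2 * (x * q ^ a) ^ j
  have hexpand : ∀ k ∈ range (m + 1),
      (-1 : ℂ) ^ (m - k) * qBinom q m k * qBinom q (n + k) a * qPoch q (-x * q ^ a) (n + k - a) *
          q ^ (((k + 1).choose 2 : ℤ) - (m : ℤ) * k + (a.choose 2 : ℤ)) =
        ∑ j ∈ range (n + m - a + 1), g j * (qDiffCoeff q m k * qBinom q (n + k) (a + j)) := by
    intro k hk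
    rw [zpow_add₀ hq0, mul_assoc _ (qBinom q _ a),
      qBinom_mul_qPoch_eq_sum hq _ (M := n + m - a + 1) (by simp at hk; omega), mul_sum, sum_mul]
    refine sum_congr rfl fun j _ ↦ ?_
    simp only [g, qDiffCoeff, neg_mul, neg_neg]
    ring
  rw [sum_congr rfl hexpand, sum_comm]
  simp only [← mul_sum, sum_qDiffCoeff_mul_qBinom hq0 hq]
  obtain ⟨t, rfl⟩ := Nat.exists_eq_add_of_le ham
  rw [show n + (a + t) - a + 1 = t + (n + 1) by omega, sum_range_add,
    sum_eq_zero fun j hj ↦ by simp at hj; simp [hj], zero_add]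
  refine sum_congr rfl fun i _ ↦ ?_
  have hexp : q ^ (a.choose 2 : ℤ) * q ^ (t + i).choose 2 * q ^ (a * (t + i)) *
      q ^ (((a + t : ℕ) : ℤ) * (n - (a + (t + i) : ℕ)) + (a + t + 1).choose 2) =
        q ^ ((a + t) * n + i.choose 2) := by
    simp only [← zpow_natCast, ← zpow_add₀ hq0]
    congr 1
    rw [← Int.cast_inj (α := ℚ)]
    push_cast [Nat.cast_choose_two]
    ring
  rw [if_pos (by omega), show a + (t + i) - (a + t) = i by omega,
    show a + t + i - a = t + i by omega, add_assoc a t i, ← hexp]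
  simp only [g, mul_pow, ← pow_mul]
  ring

/-- The Hou–Zeng q-analogue of Sun's identity. -/
theorem hou_zeng_q_sun (m n a : ℕ) (ham : a ≤ m) (han : a ≤ n) (q x : ℂ)
    (hq0 : q ≠ 0) (hq : ∀ k : ℕ, 0 < k → q ^ k ≠ 1) :
    ∑ k ∈ Finset.range (m + 1),
        (-1 : ℂ) ^ (m - k) * qBinom q m k * qBinom q (n + k) a *
          qPoch q (-x * q ^ a) (n + k - a) *
          q ^ (((k + 1).choose 2 : ℤ) - (m : ℤ) * k + (a.choose 2 : ℤ)) =
      ∑ k ∈ Finset.range (n + 1),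
        qBinom q n k * qBinom q (m + k) a * x ^ (m + k - a) *
          q ^ (m * n + k.choose 2) :=
  hou_zeng_q_sun_general m n a ham q x hq0 hq
end
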